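/- arXiv:2309.07258 — 5 statements merged into one kernel-verified Lean document; each statement's English description precedes it below -/
import Mathlib

section
/- A smooth map between smooth manifolds is a subduction (when both are regarded as diffeological spaces) if and only if for every point p of the codomain there exists a point q in the domain mapping to p at which the differential is surjective. -/
open Set Function
open scoped Manifold

/-! ## Diffeological spaces -/

/-- A diffeology on a type `X`.  A plot is a map `(Fin n → ℝ) → X` together with an open
domain `U ⊆ ℝⁿ`; only the values on `U` matter. -/
structure Diffeology' (X : Type*) where
  IsPlot : {n : ℕ} → Set (Fin n → ℝ) → ((Fin n → ℝ) → X) → Prop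
  isOpen_of_isPlot : ∀ {n : ℕ} {U : Set (Fin n → ℝ)} {φ : (Fin n → ℝ) → X},
      IsPlot U φ → IsOpen U
  isPlot_const : ∀ {n : ℕ} {U : Set (Fin n → ℝ)}, IsOpen U → ∀ x : X,
      IsPlot U fun _ => x
  isPlot_congr : ∀ {n : ℕ} {U : Set (Fin n → ℝ)} {φ ψ : (Fin n → ℝ) → X},
      Set.EqOn φ ψ U → IsPlot U φ → IsPlot U ψ
  isPlot_comp : ∀ {n m : ℕ} {U : Set (Fin n → ℝ)} {φ : (Fin n → ℝ) → X}
      {V : Set (Fin m → ℝ)} {g : (Fin m → ℝ) → (Fin n → ℝ)},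
      IsPlot U φ → IsOpen V → ContDiffOn ℝ (⊤ : ℕ∞) g V → Set.MapsTo g V U →
      IsPlot V (φ ∘ g)
  isPlot_locality : ∀ {n : ℕ} {U : Set (Fin n → ℝ)} {φ : (Fin n → ℝ) → X}, IsOpen U →
      (∀ u ∈ U, ∃ V, V ⊆ U ∧ IsOpen V ∧ u ∈ V ∧ IsPlot V φ) → IsPlot U φ

namespace Diffeology'

variable {X Y : Type*}

/-- A subset is D-open if its preimage under every plot is open. -/
def dOpen (DX : Diffeology' X) (S : Set X) : Prop :=
  ∀ {n : ℕ} {U : Set (Fin n → ℝ)} {φ : (Fin n → ℝ) → X},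
    DX.IsPlot U φ → IsOpen (U ∩ φ ⁻¹' S)

/-- The product diffeology. -/
def prod (DX : Diffeology' X) (DY : Diffeology' Y) : Diffeology' (X × Y) where
  IsPlot U φ := DX.IsPlot U (fun u => (φ u).1) ∧ DY.IsPlot U (fun u => (φ u).2)
  isOpen_of_isPlot h := DX.isOpen_of_isPlot h.1
  isPlot_const hU x := ⟨DX.isPlot_const hU x.1, DY.isPlot_const hU x.2⟩
  isPlot_congr h hp :=
    ⟨DX.isPlot_congr (fun u hu => by rw [h hu]) hp.1,
     DY.isPlot_congr (fun u hu => by rw [h hu]) hp.2⟩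
  isPlot_comp h hV hg hmap :=
    ⟨DX.isPlot_comp h.1 hV hg hmap, DY.isPlot_comp h.2 hV hg hmap⟩
  isPlot_locality hU h :=
    ⟨DX.isPlot_locality hU fun u hu => by
        obtain ⟨V, h1, h2, h3, h4⟩ := h u hu; exact ⟨V, h1, h2, h3, h4.1⟩,
     DY.isPlot_locality hU fun u hu => by
        obtain ⟨V, h1, h2, h3, h4⟩ := h u hu; exact ⟨V, h1, h2, h3, h4.2⟩⟩

/-- The subset diffeology. -/
def subset (DX : Diffeology' X) (S : Set X) : Diffeology' S where
  IsPlot U φ := DX.IsPlot U fun u => (φ u : X)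
  isOpen_of_isPlot h := DX.isOpen_of_isPlot h
  isPlot_const hU x := DX.isPlot_const hU (x : X)
  isPlot_congr h hp := DX.isPlot_congr (fun u hu => congrArg Subtype.val (h hu)) hp
  isPlot_comp h hV hg hmap := DX.isPlot_comp h hV hg hmap
  isPlot_locality hU h := DX.isPlot_locality hU fun u hu => h u hu

end Diffeology'

variable {X Y Z : Type*}

/-- Smooth maps of diffeological spaces. -/
def DSmooth (DX : Diffeology' X) (DY : Diffeology' Y) (f : X → Y) : Prop :=
  ∀ {n : ℕ} {U : Set (Fin n → ℝ)} {φ : (Fin n → ℝ) → X},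
    DX.IsPlot U φ → DY.IsPlot U (f ∘ φ)

/-- Smoothness of a map on a subset (w.r.t. the subset diffeology). -/
def DSmoothOn (DX : Diffeology' X) (DY : Diffeology' Y) (f : X → Y) (O : Set X) : Prop :=
  ∀ {n : ℕ} {U : Set (Fin n → ℝ)} {φ : (Fin n → ℝ) → X},
    DX.IsPlot U φ → Set.MapsTo φ U O → DY.IsPlot U (f ∘ φ)

/-- Subductions: plots downstairs lift locally. -/
def IsSubduction (DX : Diffeology' X) (DY : Diffeology' Y) (f : X → Y) : Prop :=
  DSmooth DX DY f ∧
    ∀ {n : ℕ} {U : Set (Fin n → ℝ)} {φ : (Fin n → ℝ) → Y}, DY.IsPlot U φ → ∀ u ∈ U,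
      ∃ V, V ⊆ U ∧ IsOpen V ∧ u ∈ V ∧ ∃ ψ, DX.IsPlot V ψ ∧ Set.EqOn (f ∘ ψ) φ V

/-- Local subductions: plots lift locally through any prescribed point of the fiber. -/
def IsLocalSubduction (DX : Diffeology' X) (DY : Diffeology' Y) (f : X → Y) : Prop :=
  DSmooth DX DY f ∧
    ∀ {n : ℕ} {U : Set (Fin n → ℝ)} {φ : (Fin n → ℝ) → Y}, DY.IsPlot U φ →
      ∀ u ∈ U, ∀ x : X, f x = φ u →
      ∃ V, V ⊆ U ∧ IsOpen V ∧ u ∈ V ∧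
        ∃ ψ, DX.IsPlot V ψ ∧ ψ u = x ∧ Set.EqOn (f ∘ ψ) φ V

/-- `DY` is the quotient diffeology of `DX` along `π`: plots are exactly the maps that
locally lift to plots of `X`. -/
def IsQuotientDiffeology (DX : Diffeology' X) (π : X → Y) (DY : Diffeology' Y) : Prop :=
  ∀ {n : ℕ} (U : Set (Fin n → ℝ)) (φ : (Fin n → ℝ) → Y),
    DY.IsPlot U φ ↔ (IsOpen U ∧ ∀ u ∈ U, ∃ V, V ⊆ U ∧ IsOpen V ∧ u ∈ V ∧
      ∃ ψ, DX.IsPlot V ψ ∧ Set.EqOn (π ∘ ψ) φ V)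

/-- A subset is totally disconnected if every plot taking values in it is locally constant. -/
def TotallyDisconnectedIn (DX : Diffeology' X) (S : Set X) : Prop :=
  ∀ {n : ℕ} {U : Set (Fin n → ℝ)} {φ : (Fin n → ℝ) → X},
    DX.IsPlot U φ → Set.MapsTo φ U S → ∀ u ∈ U,
      ∃ V, V ⊆ U ∧ IsOpen V ∧ u ∈ V ∧ ∀ v ∈ V, φ v = φ u

/-- `f` is a local diffeomorphism on the D-open set `O`. -/
def IsLocalDiffeoOn (DX : Diffeology' X) (f : X → X) (O : Set X) : Prop :=
  ∀ x ∈ O, ∃ V, V ⊆ O ∧ DX.dOpen V ∧ x ∈ V ∧ DX.dOpen (f '' V) ∧ Set.InjOn f V ∧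
    ∃ g : X → X, DSmoothOn DX DX g (f '' V) ∧ ∀ v ∈ V, g (f v) = v

/-- Quasi-étale maps of diffeological spaces: (QE1) a local subduction, (QE2) with totally
disconnected fibers, such that (QE3) every smooth map over the base defined on a D-open set
is a local diffeomorphism. -/
def IsQuasiEtale (DX : Diffeology' X) (DY : Diffeology' Y) (π : X → Y) : Prop :=
  IsLocalSubduction DX DY π ∧
  (∀ y : Y, TotallyDisconnectedIn DX (π ⁻¹' {y})) ∧
  ∀ (O : Set X) (f : X → X), DX.dOpen O → DSmoothOn DX DX f O →
    (∀ x ∈ O, π (f x) = π x) → IsLocalDiffeoOn DX f O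

/-! ## Manifolds as diffeological spaces -/

/-- `DM` is the manifold diffeology of the manifold `M`: plots are the smooth maps from
open subsets of Euclidean spaces. -/
def IsManifoldDiffeology {E H : Type*} [NormedAddCommGroup E] [NormedSpace ℝ E]
    [TopologicalSpace H] (I : ModelWithCorners ℝ E H) {M : Type*} [TopologicalSpace M]
    [ChartedSpace H M] (DM : Diffeology' M) : Prop :=
  ∀ {n : ℕ} (U : Set (Fin n → ℝ)) (φ : (Fin n → ℝ) → M),
    DM.IsPlot U φ ↔ (IsOpen U ∧ ContMDiffOn 𝓘(ℝ, Fin n → ℝ) I (⊤ : ℕ∞) φ U)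

/-- A witness that the diffeological space `(M, DM)` is a smooth (finite-dimensional,
Hausdorff, second countable) manifold with its manifold diffeology. -/
structure ManifoldDiffeologyWitness (M : Type*) (DM : Diffeology' M) where
  d : ℕ
  [tM : TopologicalSpace M]
  [cM : ChartedSpace (EuclideanSpace ℝ (Fin d)) M]
  smooth : IsManifold (𝓡 d) (⊤ : ℕ∞) M
  t2 : T2Space M
  sc : SecondCountableTopology M
  isDiffeology : IsManifoldDiffeology (𝓡 d) DM

/-- The diffeological space `(M, DM)` is a smooth manifold. -/
def IsSmoothManifoldDiffeology {M : Type*} (DM : Diffeology' M) : Prop :=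
  Nonempty (ManifoldDiffeologyWitness M DM)

/-- A quasi-étale diffeological space: every point lies in the image of a quasi-étale
chart, i.e. a quasi-étale map from a smooth manifold. -/
def IsQuasiEtaleSpace {X : Type*} (DX : Diffeology' X) : Prop :=
  ∀ x : X, ∃ (M : Type) (DM : Diffeology' M) (π : M → X),
    IsSmoothManifoldDiffeology DM ∧ IsQuasiEtale DM DX π ∧ x ∈ Set.range π

/-! ## Fiber products and cartesian morphisms in QUED -/

/-- The diffeological fiber product `X ×_Z Y` of `p : X → Z` and `f : Y → Z`. -/
def fiberProductDiffeology (DX : Diffeology' X) (DY : Diffeology' Y) (p : X → Z)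
    (f : Y → Z) : Diffeology' {w : X × Y // p w.1 = f w.2} :=
  (DX.prod DY).subset {w | p w.1 = f w.2}

/-- `p : X → Z` is cartesian in the category QUED of quasi-étale diffeological spaces:
for every QUED morphism `f : Y → Z` the diffeological fiber product is again a
quasi-étale diffeological space (so it provides the fiber product in QUED; when it is
empty there is no commutative square over `p` and `f` in QUED). -/
def IsCartesianQUED (DX : Diffeology' X) {Z : Type*} (DZ : Diffeology' Z) (p : X → Z) : Prop :=
  ∀ (Y : Type) (DY : Diffeology' Y), IsQuasiEtaleSpace DY → ∀ f : Y → Z, DSmooth DY DZ f →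
    IsQuasiEtaleSpace (fiberProductDiffeology DX DY p f)

open Filter in

theorem key_section {a b : ℕ} {F : (EuclideanSpace ℝ (Fin a)) → EuclideanSpace ℝ (Fin b)}
    {D : Set (EuclideanSpace ℝ (Fin a))} (hD : IsOpen D)
    (hF : ContDiffOn ℝ ((⊤ : ℕ∞) : WithTop ℕ∞) F D) {q : EuclideanSpace ℝ (Fin a)} (hq : q ∈ D)
    (hsurj : Surjective (fderiv ℝ F q)) :
    ∃ W : Set (EuclideanSpace ℝ (Fin b)), IsOpen W ∧ F q ∈ W ∧
      ∃ s : EuclideanSpace ℝ (Fin b) → EuclideanSpace ℝ (Fin a),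
        ContDiffOn ℝ ((⊤ : ℕ∞) : WithTop ℕ∞) s W ∧ s (F q) = q ∧ Set.MapsTo s W D ∧
        ∀ y ∈ W, F (s y) = y := by
  set n : WithTop ℕ∞ := ((⊤ : ℕ∞) : WithTop ℕ∞) with hn
  have hn1 : 1 ≤ n := by rw [hn]; exact_mod_cast (le_top : (1:ℕ∞) ≤ ⊤)
  set f' := fderiv ℝ F q with hf'
  -- right inverse
  obtain ⟨σ₀, hσ₀⟩ := LinearMap.exists_rightInverse_of_surjective (f'.toLinearMap)
    (LinearMap.range_eq_top.2 hsurj)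
  set σ : EuclideanSpace ℝ (Fin b) →L[ℝ] EuclideanSpace ℝ (Fin a) :=
    LinearMap.toContinuousLinearMap σ₀ with hσdef
  have hσ : ∀ y, f' (σ y) = y := fun y => congrFun (congrArg DFunLike.coe hσ₀) y
  set p : EuclideanSpace ℝ (Fin b) := F q with hp
  set α : EuclideanSpace ℝ (Fin b) → EuclideanSpace ℝ (Fin a) := fun y => q + σ (y - p) with hα
  have hαcd : ContDiff ℝ n α :=
    contDiff_const.add (σ.contDiff.comp (contDiff_id.sub contDiff_const))
  have hαderiv : ∀ y, HasFDerivAt α (σ) y := fun y => by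
    simpa [hα, map_sub] using ((σ.hasFDerivAt.comp y ((hasFDerivAt_id y).sub_const p)).const_add q)
  have hαp : α p = q := by simp [hα]
  set Ω : Set (EuclideanSpace ℝ (Fin b)) := α ⁻¹' D with hΩdef
  have hΩ : IsOpen Ω := hD.preimage hαcd.continuous
  have hpΩ : p ∈ Ω := by simpa [hΩdef, hαp]
  set h : EuclideanSpace ℝ (Fin b) → EuclideanSpace ℝ (Fin b) := F ∘ α with hhdef
  have hhcd : ContDiffOn ℝ n h Ω := hF.comp hαcd.contDiffOn (mapsTo_preimage α D)
  have hhAt : ∀ x ∈ Ω, ContDiffAt ℝ n h x := fun x hx => hhcd.contDiffAt (hΩ.mem_nhds hx)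
  have hFq : HasFDerivAt F f' q :=
    ((hF.contDiffAt (hD.mem_nhds hq)).differentiableAt (by simp [hn])).hasFDerivAt
  have hhp : HasFDerivAt h (f'.comp σ) p := by
    rw [← hαp] at hFq
    exact hFq.comp p (hαderiv p)
  have hid : f'.comp σ = ContinuousLinearMap.id ℝ _ := by
    ext y; simp [hσ]
  have hhp' : HasFDerivAt h ((ContinuousLinearEquiv.refl ℝ (EuclideanSpace ℝ (Fin b)) :
      EuclideanSpace ℝ (Fin b) →L[ℝ] EuclideanSpace ℝ (Fin b))) p := by
    rw [hid] at hhp; exact hhp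
  have hstrict : HasStrictFDerivAt h ((ContinuousLinearEquiv.refl ℝ (EuclideanSpace ℝ (Fin b)) :
      EuclideanSpace ℝ (Fin b) →L[ℝ] EuclideanSpace ℝ (Fin b))) p :=
    (hhAt p hpΩ).hasStrictFDerivAt' hhp' (by simp [hn])
  set e := hstrict.toOpenPartialHomeomorph h with hedef
  have hecoe : (e : EuclideanSpace ℝ (Fin b) → EuclideanSpace ℝ (Fin b)) = h := rfl
  have hpsrc : p ∈ e.source := hstrict.mem_toOpenPartialHomeomorph_source
  have hfd : ContinuousOn (fderiv ℝ h) Ω := hhcd.continuousOn_fderiv_of_isOpen hΩ hn1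
  set Ω' : Set (EuclideanSpace ℝ (Fin b)) := Ω ∩ (fderiv ℝ h) ⁻¹' {u | IsUnit u} with hΩ'def
  have hΩ'open : IsOpen Ω' := hfd.isOpen_inter_preimage hΩ Units.isOpen
  have hpΩ' : p ∈ Ω' := by
    refine ⟨hpΩ, ?_⟩
    have : fderiv ℝ h p = ContinuousLinearMap.id ℝ _ := by
      rw [hhp'.fderiv]; rfl
    simp only [Set.mem_preimage, Set.mem_setOf_eq, this]
    exact (isUnit_one (M := (EuclideanSpace ℝ (Fin b) →L[ℝ] EuclideanSpace ℝ (Fin b))))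
  set W : Set (EuclideanSpace ℝ (Fin b)) := e.target ∩ e.symm ⁻¹' Ω' with hWdef
  have hWopen : IsOpen W :=
    e.continuousOn_symm.isOpen_inter_preimage e.open_target hΩ'open
  have hep : e p = p := by rw [hecoe]; show F (α p) = p; rw [hαp]
  have hpW : p ∈ W := by
    constructor
    · rw [← hep]; exact e.map_source hpsrc
    · show e.symm p ∈ Ω'
      rw [← hep, e.left_inv hpsrc]; exact hpΩ'
  refine ⟨W, hWopen, hpW, α ∘ e.symm, ?_, ?_, ?_, ?_⟩
  · intro y hy
    have hyt : y ∈ e.target := hy.1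
    have hx : e.symm y ∈ Ω' := hy.2
    obtain ⟨u, hu⟩ := hx.2
    have hcle : HasFDerivAt h ((ContinuousLinearEquiv.ofUnit u :
        EuclideanSpace ℝ (Fin b) →L[ℝ] EuclideanSpace ℝ (Fin b))) (e.symm y) := by
      have : HasFDerivAt h (fderiv ℝ h (e.symm y)) (e.symm y) :=
        ((hhAt _ hx.1).differentiableAt (by simp [hn])).hasFDerivAt
      rwa [← hu] at this
    have hsymm : ContDiffAt ℝ n e.symm y :=
      e.contDiffAt_symm hyt (by rw [hecoe]; exact hcle) (by rw [hecoe]; exact hhAt _ hx.1)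
    exact (hαcd.contDiffAt.comp y hsymm).contDiffWithinAt
  · show α (e.symm p) = q
    have hesymm : e.symm p = p := by nth_rewrite 1 [← hep]; exact e.left_inv hpsrc
    rw [hesymm, hαp]
  · intro y hy
    exact hy.2.1
  · intro y hy
    show F (α (e.symm y)) = y
    have : h (e.symm y) = y := by rw [← hecoe]; exact e.right_inv hy.1
    exact this

open Filter in

theorem manifold_section {m n : ℕ} {M N : Type}
    [TopologicalSpace M] [ChartedSpace (EuclideanSpace ℝ (Fin m)) M]
    [IsManifold (𝓡 m) (⊤ : ℕ∞) M]
    [TopologicalSpace N] [ChartedSpace (EuclideanSpace ℝ (Fin n)) N]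
    [IsManifold (𝓡 n) (⊤ : ℕ∞) N]
    (f : M → N) (hf : ContMDiff (𝓡 m) (𝓡 n) (⊤ : ℕ∞) f) (q : M)
    (hsurj : Surjective ⇑(mfderiv (𝓡 m) (𝓡 n) f q)) :
    ∃ W : Set N, IsOpen W ∧ f q ∈ W ∧ ∃ s : N → M,
      ContMDiffOn (𝓡 n) (𝓡 m) (⊤ : ℕ∞) s W ∧ s (f q) = q ∧ ∀ y ∈ W, f (s y) = y := by
  set c := extChartAt (𝓡 m) q with hc
  set d := extChartAt (𝓡 n) (f q) with hd
  set D : Set (EuclideanSpace ℝ (Fin m)) := c.target ∩ c.symm ⁻¹' (f ⁻¹' d.source) with hD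
  have hDopen : IsOpen D :=
    (continuousOn_extChartAt_symm q).isOpen_inter_preimage (isOpen_extChartAt_target q)
      ((isOpen_extChartAt_source (f q)).preimage hf.continuous)
  set Fm : EuclideanSpace ℝ (Fin m) → EuclideanSpace ℝ (Fin n) := ↑d ∘ f ∘ ↑c.symm with hFm
  have hcsymmq : c.symm (c q) = q := extChartAt_to_inv q
  have hq'D : c q ∈ D := by
    refine ⟨mem_extChartAt_target q, ?_⟩
    simp only [Set.mem_preimage, hcsymmq]
    exact mem_extChartAt_source (f q)
  have hFmq : Fm (c q) = d (f q) := by simp [hFm, hcsymmq]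
  -- smoothness of Fm on D
  have h3 : ContMDiffOn 𝓘(ℝ, EuclideanSpace ℝ (Fin m)) (𝓡 m) (⊤ : ℕ∞) c.symm c.target :=
    contMDiffOn_extChartAt_symm q
  have h1 : ContMDiffOn (𝓡 n) 𝓘(ℝ, EuclideanSpace ℝ (Fin n)) (⊤ : ℕ∞) d d.source := by
    rw [hd, extChartAt_source]; exact contMDiffOn_extChartAt
  have hFmcd : ContDiffOn ℝ (⊤ : ℕ∞) Fm D := by
    refine ContMDiffOn.contDiffOn ?_
    exact h1.comp (hf.contMDiffOn.comp (h3.mono inter_subset_left)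
      (fun x hx => c.map_target hx.1)) (fun x hx => hx.2)
  -- derivative identification
  have hmd : MDifferentiableAt (𝓡 m) (𝓡 n) f q := hf.mdifferentiableAt (by simp)
  have hfder : mfderiv (𝓡 m) (𝓡 n) f q = fderiv ℝ Fm (c q) := by
    rw [hmd.mfderiv]
    simp only [writtenInExtChartAt, ModelWithCorners.range_eq_univ, fderivWithin_univ]
    rfl
  have hsurj' : Surjective ⇑(fderiv ℝ Fm (c q)) := by rw [← hfder]; exact hsurj
  obtain ⟨W₀, hW₀open, hpW₀, s₀, hs₀cd, hs₀p, hs₀maps, hs₀sec⟩ :=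
    key_section hDopen hFmcd hq'D hsurj'
  rw [hFmq] at hpW₀ hs₀p
  set W : Set N := d.source ∩ d ⁻¹' W₀ with hW
  have hWopen : IsOpen W :=
    (continuousOn_extChartAt (f q)).isOpen_inter_preimage (isOpen_extChartAt_source (f q)) hW₀open
  have hfqW : f q ∈ W := ⟨mem_extChartAt_source (f q), hpW₀⟩
  refine ⟨W, hWopen, hfqW, c.symm ∘ s₀ ∘ ↑d, ?_, ?_, ?_⟩
  · have hds : ContMDiffOn (𝓡 n) 𝓘(ℝ, EuclideanSpace ℝ (Fin n)) (⊤ : ℕ∞) d W := h1.mono inter_subset_left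
    have hmapsW : Set.MapsTo (↑d) W W₀ := fun y hy => hy.2
    have hcomp1 : ContMDiffOn (𝓡 n) 𝓘(ℝ, EuclideanSpace ℝ (Fin m)) (⊤ : ℕ∞) (s₀ ∘ ↑d) W :=
      (hs₀cd.contMDiffOn).comp hds hmapsW
    exact h3.comp hcomp1 (fun y hy => (hs₀maps (hmapsW hy)).1)
  · show c.symm (s₀ (d (f q))) = q
    rw [hs₀p, hcsymmq]
  · intro y hy
    show f (c.symm (s₀ (d y))) = y
    have h1' : s₀ (d y) ∈ D := hs₀maps hy.2
    have h2' : Fm (s₀ (d y)) = d y := hs₀sec _ hy.2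
    have hfs : f (c.symm (s₀ (d y))) ∈ d.source := h1'.2
    have : d (f (c.symm (s₀ (d y)))) = d y := h2'
    exact d.injOn hfs hy.1 this

/-- A smooth map between smooth manifolds is a subduction (for the
manifold diffeologies) iff every point of the codomain has a preimage point at which
the differential is surjective. -/
theorem statement0 {m n : ℕ} {M N : Type}
    [TopologicalSpace M] [ChartedSpace (EuclideanSpace ℝ (Fin m)) M]
    [IsManifold (𝓡 m) (⊤ : ℕ∞) M]
    [TopologicalSpace N] [ChartedSpace (EuclideanSpace ℝ (Fin n)) N]
    [IsManifold (𝓡 n) (⊤ : ℕ∞) N]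
    (DM : Diffeology' M) (hDM : IsManifoldDiffeology (𝓡 m) DM)
    (DN : Diffeology' N) (hDN : IsManifoldDiffeology (𝓡 n) DN)
    (f : M → N) (hf : ContMDiff (𝓡 m) (𝓡 n) (⊤ : ℕ∞) f) :
    IsSubduction DM DN f ↔
      ∀ p : N, ∃ q : M, f q = p ∧
        Function.Surjective ⇑(mfderiv (𝓡 m) (𝓡 n) f q) := by
  constructor
  · rintro ⟨-, hlift⟩ p
    set toE : (Fin n → ℝ) ≃L[ℝ] EuclideanSpace ℝ (Fin n) :=
      (EuclideanSpace.equiv (Fin n) ℝ).symm with htoE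
    set d := extChartAt (𝓡 n) p with hd
    set φ : (Fin n → ℝ) → N := fun v => d.symm (toE v) with hφ
    set U : Set (Fin n → ℝ) := ⇑toE ⁻¹' d.target with hU
    have hUopen : IsOpen U := (isOpen_extChartAt_target p).preimage toE.continuous
    set u₀ : Fin n → ℝ := toE.symm (d p) with hu₀
    have htoEu₀ : toE u₀ = d p := toE.apply_symm_apply _
    have hu₀U : u₀ ∈ U := by
      simp only [hU, Set.mem_preimage, htoEu₀]
      exact mem_extChartAt_target p
    have hφu₀ : φ u₀ = p := by
      simp only [hφ, htoEu₀]
      exact extChartAt_to_inv p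
    have hdsymm : ContMDiffOn 𝓘(ℝ, EuclideanSpace ℝ (Fin n)) (𝓡 n) (⊤ : ℕ∞) d.symm d.target :=
      contMDiffOn_extChartAt_symm p
    have hφplot : DN.IsPlot U φ := by
      rw [hDN]
      refine ⟨hUopen, ?_⟩
      exact hdsymm.comp ((toE.contDiff.contMDiff).contMDiffOn) (fun v hv => hv)
    obtain ⟨V, hVU, hVopen, hu₀V, ψ, hψplot, hψeq⟩ := hlift hφplot u₀ hu₀U
    have hψsm : ContMDiffOn 𝓘(ℝ, Fin n → ℝ) (𝓡 m) (⊤ : ℕ∞) ψ V := ((hDM V ψ).1 hψplot).2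
    refine ⟨ψ u₀, by rw [← hφu₀]; exact hψeq hu₀V, ?_⟩
    -- derivatives
    have hψdiff : MDifferentiableAt 𝓘(ℝ, Fin n → ℝ) (𝓡 m) ψ u₀ :=
      (hψsm.contMDiffAt (hVopen.mem_nhds hu₀V)).mdifferentiableAt (by simp)
    have hfdiff : MDifferentiableAt (𝓡 m) (𝓡 n) f (ψ u₀) := hf.mdifferentiableAt (by simp)
    have hddiff : MDifferentiableAt (𝓡 n) 𝓘(ℝ, EuclideanSpace ℝ (Fin n)) d p :=
      contMDiffAt_extChartAt.mdifferentiableAt (n := 1) one_ne_zero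
    have hdsymmdiff : MDifferentiableAt 𝓘(ℝ, EuclideanSpace ℝ (Fin n)) (𝓡 n) d.symm (d p) :=
      (hdsymm.contMDiffAt ((isOpen_extChartAt_target p).mem_nhds
        (mem_extChartAt_target p))).mdifferentiableAt (by simp)
    -- A := mfderiv of d.symm at d p is surjective
    have hid : mfderiv (𝓡 n) (𝓡 n)
        ((d.symm : EuclideanSpace ℝ (Fin n) → N) ∘ (d : N → EuclideanSpace ℝ (Fin n))) p =
        ContinuousLinearMap.id ℝ _ := by
      have heq : ((d.symm : EuclideanSpace ℝ (Fin n) → N) ∘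
          (d : N → EuclideanSpace ℝ (Fin n))) =ᶠ[nhds p] id := by
        filter_upwards [(isOpen_extChartAt_source (I := 𝓡 n) p).mem_nhds
          (mem_extChartAt_source (I := 𝓡 n) p)] with x hx
        exact d.left_inv hx
      rw [heq.mfderiv_eq, mfderiv_id]
    have hcomp0 : mfderiv (𝓡 n) (𝓡 n)
        ((d.symm : EuclideanSpace ℝ (Fin n) → N) ∘ (d : N → EuclideanSpace ℝ (Fin n))) p =
        (mfderiv 𝓘(ℝ, EuclideanSpace ℝ (Fin n)) (𝓡 n) d.symm (d p)).comp
          (mfderiv (𝓡 n) 𝓘(ℝ, EuclideanSpace ℝ (Fin n)) d p) :=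
      mfderiv_comp p hdsymmdiff hddiff
    have hAsurj : Function.Surjective
        ⇑(mfderiv 𝓘(ℝ, EuclideanSpace ℝ (Fin n)) (𝓡 n) d.symm (d p)) := by
      intro y
      refine ⟨mfderiv (𝓡 n) 𝓘(ℝ, EuclideanSpace ℝ (Fin n)) d p y, ?_⟩
      have h := DFunLike.congr_fun (hcomp0.symm.trans hid) y
      exact h
    -- mfderiv φ u₀ surjective
    have htoEdiff : MDifferentiableAt 𝓘(ℝ, Fin n → ℝ) 𝓘(ℝ, EuclideanSpace ℝ (Fin n))
        ⇑toE u₀ := (toE.contDiff.contMDiff).mdifferentiableAt (n := 1) one_ne_zero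
    have hφcomp : mfderiv 𝓘(ℝ, Fin n → ℝ) (𝓡 n) φ u₀ =
        (mfderiv 𝓘(ℝ, EuclideanSpace ℝ (Fin n)) (𝓡 n) d.symm (toE u₀)).comp
          (mfderiv 𝓘(ℝ, Fin n → ℝ) 𝓘(ℝ, EuclideanSpace ℝ (Fin n)) ⇑toE u₀) := by
      have : φ = ↑d.symm ∘ ⇑toE := rfl
      rw [this]
      exact mfderiv_comp u₀ (htoEu₀ ▸ hdsymmdiff) htoEdiff
    have htoEsurj : Function.Surjective
        ⇑(mfderiv 𝓘(ℝ, Fin n → ℝ) 𝓘(ℝ, EuclideanSpace ℝ (Fin n)) ⇑toE u₀) := by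
      have : mfderiv 𝓘(ℝ, Fin n → ℝ) 𝓘(ℝ, EuclideanSpace ℝ (Fin n)) ⇑toE u₀ =
          (toE : (Fin n → ℝ) →L[ℝ] EuclideanSpace ℝ (Fin n)) := by
        rw [mfderiv_eq_fderiv]
        exact toE.fderiv
      rw [this]
      exact toE.surjective
    have hφsurj : Function.Surjective ⇑(mfderiv 𝓘(ℝ, Fin n → ℝ) (𝓡 n) φ u₀) := by
      rw [hφcomp, htoEu₀]
      exact hAsurj.comp htoEsurj
    -- chain rule for f ∘ ψ = φ
    have heqn : (f ∘ ψ) =ᶠ[nhds u₀] φ := hψeq.eventuallyEq_of_mem (hVopen.mem_nhds hu₀V)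
    have hchain : (mfderiv (𝓡 m) (𝓡 n) f (ψ u₀)).comp
        (mfderiv 𝓘(ℝ, Fin n → ℝ) (𝓡 m) ψ u₀) = mfderiv 𝓘(ℝ, Fin n → ℝ) (𝓡 n) φ u₀ := by
      rw [← heqn.mfderiv_eq]
      exact (mfderiv_comp u₀ hfdiff hψdiff).symm
    intro y
    obtain ⟨x, hx⟩ := hφsurj y
    exact ⟨mfderiv 𝓘(ℝ, Fin n → ℝ) (𝓡 m) ψ u₀ x, by
      rw [← hx, ← hchain]; rfl⟩
  · intro hsec
    constructor
    · intro k U φ hφ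
      rw [hDN]
      obtain ⟨hU, hφsm⟩ := (hDM U φ).1 hφ
      exact ⟨hU, hf.comp_contMDiffOn hφsm⟩
    · intro k U φ hφ u hu
      obtain ⟨hU, hφsm⟩ := (hDN U φ).1 hφ
      obtain ⟨q, hq, hqsurj⟩ := hsec (φ u)
      obtain ⟨W, hWopen, hfqW, s, hssm, hsfq, hsec'⟩ := manifold_section f hf q hqsurj
      rw [hq] at hfqW
      set V : Set (Fin k → ℝ) := U ∩ φ ⁻¹' W with hV
      have hVopen : IsOpen V := hφsm.continuousOn.isOpen_inter_preimage hU hWopen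
      have huV : u ∈ V := ⟨hu, hfqW⟩
      refine ⟨V, Set.inter_subset_left, hVopen, huV, s ∘ φ, ?_, ?_⟩
      · rw [hDM]
        exact ⟨hVopen, hssm.comp (hφsm.mono Set.inter_subset_left) (fun v hv => hv.2)⟩
      · intro v hv
        exact hsec' _ hv.2
end

section
/- A smooth map between smooth manifolds is a local subduction (when both are regarded as diffeological spaces) if and only if it is a (not necessarily surjective) submersion. -/
open Set Function
open scoped Manifold

variable {X Y Z : Type*}

/-! ### Auxiliary lemmas -/

theorem mfderiv_eq_fderiv_written {E H E' H' M M' : Type*}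
    [NormedAddCommGroup E] [NormedSpace ℝ E] [TopologicalSpace H]
    [NormedAddCommGroup E'] [NormedSpace ℝ E'] [TopologicalSpace H']
    {I : ModelWithCorners ℝ E H} {I' : ModelWithCorners ℝ E' H'} [I.Boundaryless]
    [TopologicalSpace M] [ChartedSpace H M] [TopologicalSpace M'] [ChartedSpace H' M']
    {f : M → M'} {x : M} (h : MDifferentiableAt I I' f x) :
    mfderiv I I' f x = fderiv ℝ (writtenInExtChartAt I I' x f) (extChartAt I x x) := by
  rw [h.mfderiv, I.range_eq_univ, fderivWithin_univ]


set_option maxHeartbeats 2000000 in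
/-- A smooth map between smooth manifolds is a local subduction (for the
manifold diffeologies) iff it is a (not necessarily surjective) submersion, i.e. its
differential is surjective at every point. -/
theorem statement1 {m n : ℕ} {M N : Type}
    [TopologicalSpace M] [ChartedSpace (EuclideanSpace ℝ (Fin m)) M]
    [IsManifold (𝓡 m) (⊤ : ℕ∞) M]
    [TopologicalSpace N] [ChartedSpace (EuclideanSpace ℝ (Fin n)) N]
    [IsManifold (𝓡 n) (⊤ : ℕ∞) N]
    (DM : Diffeology' M) (hDM : IsManifoldDiffeology (𝓡 m) DM)
    (DN : Diffeology' N) (hDN : IsManifoldDiffeology (𝓡 n) DN)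
    (f : M → N) (hf : ContMDiff (𝓡 m) (𝓡 n) (⊤ : ℕ∞) f) :
    IsLocalSubduction DM DN f ↔
      ∀ q : M, Function.Surjective ⇑(mfderiv (𝓡 m) (𝓡 n) f q) := by
  have h1W : (1 : WithTop ℕ∞) ≤ ((⊤ : ℕ∞) : WithTop ℕ∞) := by exact_mod_cast le_top
  constructor
  · rintro ⟨-, hlift⟩ q
    set y := f q with hy
    set c := extChartAt (𝓡 n) y with hc
    set L : (Fin n → ℝ) ≃L[ℝ] EuclideanSpace ℝ (Fin n) :=
      (EuclideanSpace.equiv (Fin n) ℝ).symm with hLdef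
    set U : Set (Fin n → ℝ) := ⇑L ⁻¹' c.target with hUdef
    have hUopen : IsOpen U := (isOpen_extChartAt_target y).preimage L.continuous
    set φ : (Fin n → ℝ) → N := fun v => c.symm (L v) with hφdef
    have hφs : ContMDiffOn 𝓘(ℝ, Fin n → ℝ) (𝓡 n) (⊤ : ℕ∞) φ U :=
      (contMDiffOn_extChartAt_symm y).comp
        ((contMDiff_iff_contDiff.2 L.toContinuousLinearMap.contDiff).contMDiffOn)
        (fun v hv => hv)
    have hφ : DN.IsPlot U φ := (hDN U φ).2 ⟨hUopen, hφs⟩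
    set u : Fin n → ℝ := L.symm (c y) with hu_def
    have hLu : L u = c y := L.apply_symm_apply _
    have hu : u ∈ U := by rw [hUdef, mem_preimage, hLu]; exact mem_extChartAt_target y
    have hφu : f q = φ u := by
      show f q = c.symm (L u)
      rw [hLu]
      exact (c.left_inv (mem_extChartAt_source y)).symm
    obtain ⟨V, hVU, hVopen, huV, ψ, hψ, hψu, heq⟩ := hlift hφ u hu q hφu
    obtain ⟨-, hψs⟩ := (hDM V ψ).1 hψ
    have hmd_f : MDifferentiableAt (𝓡 m) (𝓡 n) f (ψ u) :=
      (hf (ψ u)).mdifferentiableAt (by simp)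
    have hmd_ψ : MDifferentiableAt 𝓘(ℝ, Fin n → ℝ) (𝓡 m) ψ u :=
      (hψs.contMDiffAt (hVopen.mem_nhds huV)).mdifferentiableAt (by simp)
    have hmd_φ : MDifferentiableAt 𝓘(ℝ, Fin n → ℝ) (𝓡 n) φ u :=
      (hφs.contMDiffAt (hUopen.mem_nhds hu)).mdifferentiableAt (by simp)
    have hcomp : mfderiv 𝓘(ℝ, Fin n → ℝ) (𝓡 n) (f ∘ ψ) u
        = (mfderiv (𝓡 m) (𝓡 n) f (ψ u)).comp (mfderiv 𝓘(ℝ, Fin n → ℝ) (𝓡 m) ψ u) :=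
      mfderiv_comp u hmd_f hmd_ψ
    have hEq : (f ∘ ψ) =ᶠ[nhds u] φ := Filter.eventuallyEq_of_mem (hVopen.mem_nhds huV) heq
    have hmfφ : mfderiv 𝓘(ℝ, Fin n → ℝ) (𝓡 n) (f ∘ ψ) u
        = mfderiv 𝓘(ℝ, Fin n → ℝ) (𝓡 n) φ u := hEq.mfderiv_eq
    have hwr : writtenInExtChartAt 𝓘(ℝ, Fin n → ℝ) (𝓡 n) u φ =ᶠ[nhds u]
        ⇑(L.toContinuousLinearMap) := by
      filter_upwards [hUopen.mem_nhds hu] with v hv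
      show extChartAt (𝓡 n) (φ u) (φ ((extChartAt 𝓘(ℝ, Fin n → ℝ) u).symm v)) = L v
      rw [extChartAt_model_space_eq_id]
      show extChartAt (𝓡 n) (φ u) (φ v) = L v
      rw [show φ u = y from hφu ▸ rfl]
      exact c.right_inv hv
    have hsurjφ : Function.Surjective ⇑(mfderiv 𝓘(ℝ, Fin n → ℝ) (𝓡 n) φ u) := by
      rw [mfderiv_eq_fderiv_written hmd_φ]
      simp only [extChartAt_model_space_eq_id, PartialEquiv.refl_coe, id_eq]
      rw [hwr.fderiv_eq, L.toContinuousLinearMap.fderiv]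
      exact L.surjective
    have hsurjc : Function.Surjective
        ⇑((mfderiv (𝓡 m) (𝓡 n) f (ψ u)).comp (mfderiv 𝓘(ℝ, Fin n → ℝ) (𝓡 m) ψ u)) := by
      rw [← hcomp, hmfφ]; exact hsurjφ
    rw [ContinuousLinearMap.coe_comp'] at hsurjc
    rw [← hψu]
    exact hsurjc.of_comp
  · intro hsubm
    have hD : DSmooth DM DN f := by
      intro k U φ hφ
      obtain ⟨hUo, hφs⟩ := (hDM U φ).1 hφ
      exact (hDN U (f ∘ φ)).2 ⟨hUo, hf.comp_contMDiffOn hφs⟩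
    refine ⟨hD, ?_⟩
    intro k U φ hφ u hu x hx
    obtain ⟨hUo, hφs⟩ := (hDN U φ).1 hφ
    set cM := extChartAt (𝓡 m) x with hcMdef
    set cN := extChartAt (𝓡 n) (f x) with hcNdef
    set a := cM x with hadef
    set F : EuclideanSpace ℝ (Fin m) → EuclideanSpace ℝ (Fin n) :=
      ⇑cN ∘ f ∘ ⇑cM.symm with hFdef
    set s : Set (EuclideanSpace ℝ (Fin m)) :=
      cM.target ∩ (f ∘ ⇑cM.symm) ⁻¹' cN.source with hsdef
    have hsopen : IsOpen s :=
      ContinuousOn.isOpen_inter_preimage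
        (hf.continuous.comp_continuousOn (continuousOn_extChartAt_symm x))
        (isOpen_extChartAt_target x) (isOpen_extChartAt_source (f x))
    have hcMa : cM.symm a = x := cM.left_inv (mem_extChartAt_source x)
    have ha_s : a ∈ s := by
      refine ⟨mem_extChartAt_target x, ?_⟩
      show f (cM.symm a) ∈ cN.source
      rw [hcMa]
      exact mem_extChartAt_source (f x)
    have hFs : ContMDiffOn 𝓘(ℝ, EuclideanSpace ℝ (Fin m)) 𝓘(ℝ, EuclideanSpace ℝ (Fin n))
        (⊤ : ℕ∞) F s := by
      refine ContMDiffOn.comp (contMDiffOn_extChartAt (x := f x))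
        (hf.comp_contMDiffOn ((contMDiffOn_extChartAt_symm x).mono inter_subset_left)) ?_
      intro v hv
      rw [← extChartAt_source (𝓡 n)]
      exact hv.2
    have hFs' := contMDiffOn_iff_contDiffOn.1 hFs
    set D := fderiv ℝ F a with hDdef
    have hFa : HasFDerivAt F D a :=
      ((hFs'.contDiffAt (hsopen.mem_nhds ha_s)).differentiableAt (by simp)).hasFDerivAt
    have hDsurj : Function.Surjective ⇑D := by
      have hq := hsubm x
      rw [mfderiv_eq_fderiv_written ((hf x).mdifferentiableAt (by simp))] at hq
      exact hq
    set K := D.ker with hKdef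
    obtain ⟨P, hP⟩ := D.ker_closedComplemented_of_finiteDimensional_range
    set θ : EuclideanSpace ℝ (Fin m) → EuclideanSpace ℝ (Fin n) × K :=
      fun v => (F v, P v) with hθdef
    set θ' := D.prod P with hθ'def
    have hθ'inj : Function.Injective ⇑θ' := by
      intro v w hvw
      have h0 : θ' (v - w) = 0 := by rw [map_sub, hvw, sub_self]
      have hD0 : D (v - w) = 0 := congrArg Prod.fst h0
      have hP0 : P (v - w) = 0 := congrArg Prod.snd h0
      have hmem : v - w ∈ K := LinearMap.mem_ker.2 hD0
      have hPv : P (v - w) = ⟨v - w, hmem⟩ := hP ⟨v - w, hmem⟩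
      rw [hP0] at hPv
      have : v - w = (0 : EuclideanSpace ℝ (Fin m)) :=
        (congrArg Subtype.val hPv).symm
      exact sub_eq_zero.1 this
    have hrank : Module.finrank ℝ (EuclideanSpace ℝ (Fin m))
        = Module.finrank ℝ (EuclideanSpace ℝ (Fin n) × K) := by
      have h1 := LinearMap.finrank_range_add_finrank_ker
        (D : EuclideanSpace ℝ (Fin m) →ₗ[ℝ] EuclideanSpace ℝ (Fin n))
      have h2 : LinearMap.range (D : EuclideanSpace ℝ (Fin m) →ₗ[ℝ] EuclideanSpace ℝ (Fin n))
          = ⊤ := LinearMap.range_eq_top.2 hDsurj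
      rw [h2, finrank_top] at h1
      rw [Module.finrank_prod, ← h1]
    set θ'e : EuclideanSpace ℝ (Fin m) ≃L[ℝ] EuclideanSpace ℝ (Fin n) × K :=
      (LinearMap.linearEquivOfInjective (θ' : EuclideanSpace ℝ (Fin m) →ₗ[ℝ]
        EuclideanSpace ℝ (Fin n) × K) hθ'inj hrank).toContinuousLinearEquiv with hθ'edef
    have hθ'e_coe : (θ'e : EuclideanSpace ℝ (Fin m) →L[ℝ] EuclideanSpace ℝ (Fin n) × K)
        = θ' := by
      refine ContinuousLinearMap.ext fun v => ?_
      show (LinearMap.linearEquivOfInjective _ hθ'inj hrank) v = θ' v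
      rw [LinearMap.linearEquivOfInjective_apply]
      rfl
    have hθs : ContDiffOn ℝ ((⊤ : ℕ∞) : WithTop ℕ∞) θ s := ContDiffOn.prodMk hFs' P.contDiff.contDiffOn
    have hθ_deriv : ∀ v ∈ s, HasFDerivAt θ ((fderiv ℝ F v).prod P) v := fun v hv =>
      (((hFs'.contDiffAt (hsopen.mem_nhds hv)).differentiableAt (by simp)).hasFDerivAt).prodMk
        P.hasFDerivAt
    set A : EuclideanSpace ℝ (Fin m) →
        (EuclideanSpace ℝ (Fin m) →L[ℝ] EuclideanSpace ℝ (Fin n) × K) :=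
      fun v => (ContinuousLinearMap.prodₗᵢ ℝ) (fderiv ℝ F v, P) with hAdef
    have hAcont : ContinuousOn A s :=
      (ContinuousLinearMap.prodₗᵢ ℝ).continuous.comp_continuousOn
        ((hFs'.continuousOn_fderiv_of_isOpen hsopen h1W).prodMk continuousOn_const)
    set W := s ∩ A ⁻¹' (Set.range ((↑) : (EuclideanSpace ℝ (Fin m) ≃L[ℝ]
      EuclideanSpace ℝ (Fin n) × K) → (EuclideanSpace ℝ (Fin m) →L[ℝ]
      EuclideanSpace ℝ (Fin n) × K))) with hWdef
    have hWopen : IsOpen W :=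
      hAcont.isOpen_inter_preimage hsopen ContinuousLinearEquiv.isOpen
    have haW : a ∈ W := by
      refine ⟨ha_s, ⟨θ'e, ?_⟩⟩
      rw [hθ'e_coe]
      rfl
    have hθa : ContDiffAt ℝ ((⊤ : ℕ∞) : WithTop ℕ∞) θ a :=
      hθs.contDiffAt (hsopen.mem_nhds ha_s)
    have hθ'a : HasFDerivAt θ (θ'e : EuclideanSpace ℝ (Fin m) →L[ℝ]
        EuclideanSpace ℝ (Fin n) × K) a := by
      rw [hθ'e_coe]
      exact hFa.prodMk P.hasFDerivAt
    set Ψ := hθa.toOpenPartialHomeomorph θ hθ'a (by simp) with hΨdef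
    have haΨs : a ∈ Ψ.source := hθa.mem_toOpenPartialHomeomorph_source hθ'a (by simp)
    have hθaΨt : θ a ∈ Ψ.target := hθa.image_mem_toOpenPartialHomeomorph_target hθ'a (by simp)
    have hΨsymm_a : Ψ.symm (θ a) = a := Ψ.left_inv haΨs
    have hsymm_smooth : ∀ b ∈ Ψ.target, Ψ.symm b ∈ W →
        ContDiffAt ℝ ((⊤ : ℕ∞) : WithTop ℕ∞) Ψ.symm b := by
      intro b hb hbW
      obtain ⟨e', he'⟩ := hbW.2
      refine Ψ.contDiffAt_symm hb (f₀' := e') ?_ (hθs.contDiffAt (hsopen.mem_nhds hbW.1))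
      rw [he']
      exact hθ_deriv _ hbW.1
    set T := Ψ.target ∩ Ψ.symm ⁻¹' W with hTdef
    have hTopen : IsOpen T :=
      Ψ.continuousOn_symm.isOpen_inter_preimage Ψ.open_target hWopen
    have hθaT : θ a ∈ T := ⟨hθaΨt, by rw [mem_preimage, hΨsymm_a]; exact haW⟩
    set g : (Fin k → ℝ) → EuclideanSpace ℝ (Fin n) := ⇑cN ∘ φ with hgdef
    set U' := U ∩ φ ⁻¹' cN.source with hU'def
    have hU'open : IsOpen U' :=
      hφs.continuousOn.isOpen_inter_preimage hUo (isOpen_extChartAt_source (f x))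
    have hφu_mem : φ u ∈ cN.source := by rw [← hx]; exact mem_extChartAt_source (f x)
    have huU' : u ∈ U' := ⟨hu, hφu_mem⟩
    have hgs : ContDiffOn ℝ ((⊤ : ℕ∞) : WithTop ℕ∞) g U' := by
      refine contMDiffOn_iff_contDiffOn.1 (ContMDiffOn.comp
        (contMDiffOn_extChartAt (x := f x)) (hφs.mono inter_subset_left) ?_)
      intro v hv
      rw [← extChartAt_source (𝓡 n)]
      exact hv.2
    set G : (Fin k → ℝ) → EuclideanSpace ℝ (Fin n) × K := fun v => (g v, P a) with hGdef
    have hGs : ContDiffOn ℝ ((⊤ : ℕ∞) : WithTop ℕ∞) G U' := hgs.prodMk contDiffOn_const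
    set V := U' ∩ G ⁻¹' T with hVdef
    have hVopen : IsOpen V := hGs.continuousOn.isOpen_inter_preimage hU'open hTopen
    have hGu : G u = θ a := by
      have hFa_gu : F a = g u := by
        show cN (f (cM.symm a)) = cN (φ u)
        rw [hcMa, hx]
      show (g u, P a) = (F a, P a)
      rw [hFa_gu]
    have huV : u ∈ V := ⟨huU', by rw [mem_preimage, hGu]; exact hθaT⟩
    set ψ : (Fin k → ℝ) → M := fun v => cM.symm (Ψ.symm (G v)) with hψdef
    have hψs : ContMDiffOn 𝓘(ℝ, Fin k → ℝ) (𝓡 m) (⊤ : ℕ∞) ψ V := by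
      intro v hv
      have hGv : ContMDiffAt 𝓘(ℝ, Fin k → ℝ) 𝓘(ℝ, EuclideanSpace ℝ (Fin n) × K) (⊤ : ℕ∞) G v :=
        ((hGs.mono inter_subset_left).contDiffAt (hVopen.mem_nhds hv)).contMDiffAt
      have hb : G v ∈ Ψ.target := hv.2.1
      have hw : Ψ.symm (G v) ∈ W := hv.2.2
      have h2' : ContMDiffAt 𝓘(ℝ, EuclideanSpace ℝ (Fin n) × K)
          𝓘(ℝ, EuclideanSpace ℝ (Fin m)) (⊤ : ℕ∞) Ψ.symm (G v) :=
        (hsymm_smooth _ hb hw).contMDiffAt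
      have hwt : Ψ.symm (G v) ∈ cM.target := hw.1.1
      have h3' : ContMDiffAt 𝓘(ℝ, EuclideanSpace ℝ (Fin m)) (𝓡 m) (⊤ : ℕ∞) ⇑cM.symm
          (Ψ.symm (G v)) :=
        (contMDiffWithinAt_extChartAt_symm_target x hwt).contMDiffAt
          ((isOpen_extChartAt_target x).mem_nhds hwt)
      exact (h3'.comp v (h2'.comp v hGv)).contMDiffWithinAt
    have hψplot : DM.IsPlot V ψ := (hDM V ψ).2 ⟨hVopen, hψs⟩
    have hψu : ψ u = x := by
      show cM.symm (Ψ.symm (G u)) = x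
      rw [hGu, hΨsymm_a, hcMa]
    refine ⟨V, fun v hv => hv.1.1, hVopen, huV, ψ, hψplot, hψu, ?_⟩
    intro v hv
    have hwW : Ψ.symm (G v) ∈ W := hv.2.2
    have hws : Ψ.symm (G v) ∈ s := hwW.1
    have hre : θ (Ψ.symm (G v)) = G v := Ψ.right_inv hv.2.1
    have hFg : F (Ψ.symm (G v)) = g v := congrArg Prod.fst hre
    have hfmem : f (ψ v) ∈ cN.source := hws.2
    have hφmem : φ v ∈ cN.source := hv.1.2
    show f (ψ v) = φ v
    exact cN.injOn hfmem hφmem hFg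
end

section
/- Let G be a Lie group and K a totally disconnected normal subgroup of G. Then the quotient map π : G → G/K (with G/K given the quotient diffeology) is quasi-étale; in particular G/K is a quasi-étale diffeological space. -/
open Set Function
open scoped Manifold

variable {X Y Z : Type*}

/-! ## Auxiliary material -/

/-- Plots restrict to open subsets. -/
theorem Diffeology'.isPlot_mono {X : Type*} (D : Diffeology' X) {n : ℕ}
    {U V : Set (Fin n → ℝ)} {φ : (Fin n → ℝ) → X} (h : D.IsPlot U φ)
    (hV : IsOpen V) (hVU : V ⊆ U) : D.IsPlot V φ := by
  simpa using D.isPlot_comp h hV contDiffOn_id hVU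

/-- The manifold diffeology on a charted space. -/
def manifoldDiffeology {E H : Type*} [NormedAddCommGroup E] [NormedSpace ℝ E]
    [TopologicalSpace H] (I : ModelWithCorners ℝ E H) (M : Type*) [TopologicalSpace M]
    [ChartedSpace H M] : Diffeology' M where
  IsPlot {n} U φ := IsOpen U ∧ ContMDiffOn 𝓘(ℝ, Fin n → ℝ) I (⊤ : ℕ∞) φ U
  isOpen_of_isPlot h := h.1
  isPlot_const hU x := ⟨hU, contMDiffOn_const⟩
  isPlot_congr h hp := ⟨hp.1, hp.2.congr fun x hx => (h hx).symm⟩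
  isPlot_comp h hV hg hmap := ⟨hV, h.2.comp (hg.of_le (by simp)).contMDiffOn hmap⟩
  isPlot_locality hU h := by
    refine ⟨hU, fun u hu => ?_⟩
    obtain ⟨V, _, h2, h3, h4⟩ := h u hu
    exact ((h4.2 u h3).contMDiffAt (h2.mem_nhds h3)).contMDiffWithinAt

theorem isManifoldDiffeology_manifoldDiffeology {E H : Type*} [NormedAddCommGroup E]
    [NormedSpace ℝ E] [TopologicalSpace H] (I : ModelWithCorners ℝ E H) (M : Type*)
    [TopologicalSpace M] [ChartedSpace H M] :
    IsManifoldDiffeology I (manifoldDiffeology I M) := fun _ _ => ⟨fun h => h, fun h => h⟩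

section LieGroupQuotient

variable {d : ℕ} {G : Type} [Group G] [TopologicalSpace G]
  [ChartedSpace (EuclideanSpace ℝ (Fin d)) G] [LieGroup (𝓡 d) (⊤ : ℕ∞) G]
  {DG : Diffeology' G} {K : Subgroup G} {DQ : Diffeology' (G ⧸ K)}

theorem plot_mul (hDG : IsManifoldDiffeology (𝓡 d) DG) {n : ℕ} {U : Set (Fin n → ℝ)}
    {φ ψ : (Fin n → ℝ) → G} (hφ : DG.IsPlot U φ) (hψ : DG.IsPlot U ψ) :
    DG.IsPlot U fun v => φ v * ψ v :=
  (hDG U _).mpr ⟨((hDG U φ).mp hφ).1, ((hDG U φ).mp hφ).2.mul ((hDG U ψ).mp hψ).2⟩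

theorem plot_inv (hDG : IsManifoldDiffeology (𝓡 d) DG) {n : ℕ} {U : Set (Fin n → ℝ)}
    {φ : (Fin n → ℝ) → G} (hφ : DG.IsPlot U φ) :
    DG.IsPlot U fun v => (φ v)⁻¹ :=
  (hDG U _).mpr ⟨((hDG U φ).mp hφ).1, ((hDG U φ).mp hφ).2.inv⟩

theorem plot_continuousOn (hDG : IsManifoldDiffeology (𝓡 d) DG) {n : ℕ}
    {U : Set (Fin n → ℝ)} {φ : (Fin n → ℝ) → G} (hφ : DG.IsPlot U φ) :
    ContinuousOn φ U :=
  ((hDG U φ).mp hφ).2.continuousOn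

/-- The quotient map `G → G ⧸ K` is quasi-étale. -/
theorem quasiEtale_mk (hDG : IsManifoldDiffeology (𝓡 d) DG)
    (hTD : TotallyDisconnectedIn DG (K : Set G))
    (hDQ : IsQuotientDiffeology DG QuotientGroup.mk DQ) :
    IsQuasiEtale DG DQ QuotientGroup.mk := by
  have hmk : DSmooth DG DQ (QuotientGroup.mk (s := K)) := by
    intro n U φ hφ
    exact (hDQ U _).mpr ⟨DG.isOpen_of_isPlot hφ, fun u hu =>
      ⟨U, Subset.rfl, DG.isOpen_of_isPlot hφ, hu, φ, hφ, fun v _ => rfl⟩⟩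
  refine ⟨⟨hmk, ?_⟩, ?_, ?_⟩
  · -- local subduction
    intro n U φ hφ u hu x hx
    obtain ⟨hUopen, hloc⟩ := (hDQ U φ).mp hφ
    obtain ⟨V, hVU, hVopen, huV, ψ, hψ, hψφ⟩ := hloc u hu
    have hk : (ψ u)⁻¹ * x ∈ K := QuotientGroup.eq.mp ((hψφ huV).trans hx.symm)
    refine ⟨V, hVU, hVopen, huV, fun v => ψ v * ((ψ u)⁻¹ * x),
      plot_mul hDG hψ (DG.isPlot_const hVopen _), mul_inv_cancel_left _ _, fun v hv => ?_⟩
    exact (QuotientGroup.mk_mul_of_mem (ψ v) hk).trans (hψφ hv)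
  · -- totally disconnected fibers
    intro y n U φ hφ hmaps u hu
    have hρ : DG.IsPlot U fun v => (φ u)⁻¹ * φ v :=
      plot_mul hDG (DG.isPlot_const (DG.isOpen_of_isPlot hφ) _) hφ
    have hρK : MapsTo (fun v => (φ u)⁻¹ * φ v) U (K : Set G) := fun v hv => by
      have h1 : QuotientGroup.mk (φ u) = (QuotientGroup.mk (φ v) : G ⧸ K) :=
        (hmaps hu).trans (hmaps hv).symm
      exact QuotientGroup.eq.mp h1
    obtain ⟨V, h1, h2, h3, h4⟩ := hTD hρ hρK u hu
    exact ⟨V, h1, h2, h3, fun v hv => mul_left_cancel (h4 v hv)⟩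
  · -- smooth maps over the base are local diffeos
    intro O f hO hf hπf x hxO
    set k := x⁻¹ * f x with hk_def
    have hkK : k ∈ K := QuotientGroup.eq.mp (hπf x hxO).symm
    set V : Set G := {y | y ∈ O ∧ y⁻¹ * f y = k} with hV_def
    have hfV : ∀ y ∈ V, f y = y * k := fun y hy => by
      rw [← hy.2, mul_inv_cancel_left]
    have hVopen : DG.dOpen V := by
      intro n U φ hφ
      rw [isOpen_iff_forall_mem_open]
      rintro u ⟨huU, hφuO, hφuk⟩
      have hU1 : IsOpen (U ∩ φ ⁻¹' O) := hO hφ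
      have hφ1 : DG.IsPlot (U ∩ φ ⁻¹' O) φ := DG.isPlot_mono hφ hU1 inter_subset_left
      have hffφ : DG.IsPlot (U ∩ φ ⁻¹' O) (f ∘ φ) := hf hφ1 fun v hv => hv.2
      have hρ : DG.IsPlot (U ∩ φ ⁻¹' O) fun v => (φ v)⁻¹ * f (φ v) :=
        plot_mul hDG (plot_inv hDG hφ1) hffφ
      have hρK : MapsTo (fun v => (φ v)⁻¹ * f (φ v)) (U ∩ φ ⁻¹' O) (K : Set G) :=
        fun v hv => QuotientGroup.eq.mp (hπf (φ v) hv.2).symm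
      obtain ⟨V₂, hV₂sub, hV₂open, huV₂, hconst⟩ := hTD hρ hρK u ⟨huU, hφuO⟩
      refine ⟨V₂, fun v hv => ⟨(hV₂sub hv).1, (hV₂sub hv).2, ?_⟩, hV₂open, huV₂⟩
      rw [hconst v hv, hφuk]
    refine ⟨V, fun y hy => hy.1, hVopen, ⟨hxO, rfl⟩, ?_, ?_, fun z => z * k⁻¹, ?_, ?_⟩
    · -- f '' V is D-open
      intro n U φ hφ
      have hψ : DG.IsPlot U fun v => φ v * k⁻¹ :=
        plot_mul hDG hφ (DG.isPlot_const (DG.isOpen_of_isPlot hφ) _)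
      have h1 := hVopen hψ
      have h2 : U ∩ (fun v => φ v * k⁻¹) ⁻¹' V = U ∩ φ ⁻¹' (f '' V) := by
        ext v
        refine and_congr_right fun _ => ⟨fun hv => ?_, ?_⟩
        · refine ⟨φ v * k⁻¹, hv, ?_⟩
          rw [hfV _ hv, inv_mul_cancel_right]
        · rintro ⟨y, hy, hyv⟩
          have : φ v = y * k := by rw [← hyv, hfV y hy]
          simpa [this] using hy
      rwa [h2] at h1
    · -- injectivity
      intro a ha b hb hab
      rw [hfV a ha, hfV b hb] at hab
      exact mul_right_cancel hab
    · -- smooth inverse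
      intro n U φ hφ _
      exact plot_mul hDG hφ (DG.isPlot_const (DG.isOpen_of_isPlot hφ) _)
    · intro v hv
      show f v * k⁻¹ = v
      rw [hfV v hv, mul_inv_cancel_right]

/-- Transfer of quasi-étaleness along a diffeological open embedding `χ`. -/
theorem quasiEtale_transfer (hDG : IsManifoldDiffeology (𝓡 d) DG)
    (hqe : IsQuasiEtale DG DQ QuotientGroup.mk)
    {M : Type*} {DM : Diffeology' M} {χ : M → G} {χinv : G → M} {W : Set G}
    (hWopen : IsOpen W) (hmem : ∀ v, χ v ∈ W)
    (hleft : ∀ v, χinv (χ v) = v) (hright : ∀ x ∈ W, χ (χinv x) = x)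
    (hb1 : ∀ {n : ℕ} {U : Set (Fin n → ℝ)} {φ : (Fin n → ℝ) → M},
      DM.IsPlot U φ → DG.IsPlot U fun v => χ (φ v))
    (hb2 : ∀ {n : ℕ} {U : Set (Fin n → ℝ)} {ρ : (Fin n → ℝ) → G},
      DG.IsPlot U ρ → MapsTo ρ U W → DM.IsPlot U fun v => χinv (ρ v)) :
    IsQuasiEtale DM DQ fun v => QuotientGroup.mk (χ v) := by
  classical
  obtain ⟨⟨hmks, hmkl⟩, hmkf, hmk3⟩ := hqe
  have hinj : Function.Injective χ := fun a b hab => by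
    rw [← hleft a, hab, hleft b]
  refine ⟨⟨?_, ?_⟩, ?_, ?_⟩
  · -- smoothness
    intro n U φ hφ
    exact hmks (hb1 hφ)
  · -- local subduction
    intro n U φ hφ u hu x hx
    obtain ⟨V, hVU, hVopen, huV, ψ, hψ, hψu, hψφ⟩ := hmkl hφ u hu (χ x) hx
    have hV'open : IsOpen (V ∩ ψ ⁻¹' W) :=
      (plot_continuousOn hDG hψ).isOpen_inter_preimage hVopen hWopen
    have huV' : u ∈ V ∩ ψ ⁻¹' W := ⟨huV, by rw [mem_preimage, hψu]; exact hmem x⟩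
    have hψ' : DG.IsPlot (V ∩ ψ ⁻¹' W) ψ := DG.isPlot_mono hψ hV'open inter_subset_left
    refine ⟨V ∩ ψ ⁻¹' W, fun v hv => hVU hv.1, hV'open, huV',
      fun v => χinv (ψ v), hb2 hψ' (fun v hv => hv.2), by show χinv (ψ u) = x; rw [hψu, hleft], fun v hv => ?_⟩
    show QuotientGroup.mk (χ (χinv (ψ v))) = φ v
    rw [hright _ hv.2]
    exact hψφ hv.1
  · -- totally disconnected fibers
    intro z n U φ hφ hmaps u hu
    have hχφ : DG.IsPlot U fun v => χ (φ v) := hb1 hφ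
    have hm : MapsTo (fun v => χ (φ v)) U (QuotientGroup.mk ⁻¹' {z}) := fun v hv => hmaps hv
    obtain ⟨V, h1, h2, h3, h4⟩ := hmkf z hχφ hm u hu
    exact ⟨V, h1, h2, h3, fun v hv => hinj (h4 v hv)⟩
  · -- QE3
    intro O f hO hf hcomm
    have hO' : DG.dOpen (χ '' O) := by
      intro n U ρ hρ
      rw [isOpen_iff_forall_mem_open]
      rintro u ⟨huU, o, hoO, hou⟩
      have hU1 : IsOpen (U ∩ ρ ⁻¹' W) :=
        (plot_continuousOn hDG hρ).isOpen_inter_preimage (DG.isOpen_of_isPlot hρ) hWopen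
      have hρ1 : DG.IsPlot (U ∩ ρ ⁻¹' W) ρ := DG.isPlot_mono hρ hU1 inter_subset_left
      have hσ : DM.IsPlot (U ∩ ρ ⁻¹' W) fun v => χinv (ρ v) := hb2 hρ1 fun v hv => hv.2
      refine ⟨(U ∩ ρ ⁻¹' W) ∩ (fun v => χinv (ρ v)) ⁻¹' O, ?_, hO hσ, ?_⟩
      · rintro v ⟨⟨hvU, hvW⟩, hvO⟩
        exact ⟨hvU, χinv (ρ v), hvO, hright _ hvW⟩
      · have hρuW : ρ u ∈ W := by rw [← hou]; exact hmem o
        refine ⟨⟨huU, hρuW⟩, ?_⟩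
        show χinv (ρ u) ∈ O
        rw [← hou, hleft]
        exact hoO
    set F : G → G := fun z => if z ∈ W then χ (f (χinv z)) else z with hF_def
    have hFχ : ∀ o ∈ O, F (χ o) = χ (f o) := fun o _ => by
      show (if χ o ∈ W then χ (f (χinv (χ o))) else χ o) = χ (f o)
      rw [if_pos (hmem o), hleft]
    have hFs : DSmoothOn DG DG F (χ '' O) := by
      intro n U ρ hρ hmaps
      have hmW : MapsTo ρ U W := fun v hv => by
        obtain ⟨o, _, ho⟩ := hmaps hv; rw [← ho]; exact hmem o
      have hmO : MapsTo (fun v => χinv (ρ v)) U O := fun v hv => by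
        obtain ⟨o, hoO, ho⟩ := hmaps hv
        show χinv (ρ v) ∈ O
        rw [← ho, hleft]; exact hoO
      have h1 : DM.IsPlot U fun v => f (χinv (ρ v)) := hf (hb2 hρ hmW) hmO
      have h2 : DG.IsPlot U fun v => χ (f (χinv (ρ v))) := hb1 h1
      refine DG.isPlot_congr (fun v hv => ?_) h2
      show χ (f (χinv (ρ v))) = F (ρ v)
      rw [hF_def]
      simp only [if_pos (hmW hv)]
    have hFcomm : ∀ z ∈ χ '' O, QuotientGroup.mk (F z) = (QuotientGroup.mk z : G ⧸ K) := by
      rintro z ⟨o, hoO, rfl⟩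
      rw [hFχ o hoO]
      exact hcomm o hoO
    have hLD := hmk3 (χ '' O) F hO' hFs hFcomm
    intro x hxO
    obtain ⟨VG, hVGsub, hVGopen, hχxVG, hFVGopen, hFinj, gG, hgGs, hgGinv⟩ :=
      hLD (χ x) ⟨x, hxO, rfl⟩
    have hVGW : VG ⊆ W := fun z hz => by
      obtain ⟨o, _, ho⟩ := hVGsub hz; rw [← ho]; exact hmem o
    have hVO : χ ⁻¹' VG ⊆ O := fun v hv => by
      obtain ⟨o, hoO, ho⟩ := hVGsub hv
      exact hinj ho ▸ hoO
    have hpull : ∀ (S : Set G), DG.dOpen S → DM.dOpen (χ ⁻¹' S) := by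
      intro S hS n U φ hφ
      exact hS (hb1 hφ)
    have himg : f '' (χ ⁻¹' VG) = χ ⁻¹' (F '' VG) := by
      ext z; constructor
      · rintro ⟨v, hv, rfl⟩
        exact ⟨χ v, hv, hFχ v (hVO hv)⟩
      · rintro ⟨w, hwVG, hw⟩
        obtain ⟨o, hoO, rfl⟩ := hVGsub hwVG
        rw [hFχ o hoO] at hw
        exact ⟨o, hwVG, hinj hw⟩
    refine ⟨χ ⁻¹' VG, hVO, hpull VG hVGopen, hχxVG, ?_, ?_,
      fun z => χinv (gG (χ z)), ?_, ?_⟩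
    · rw [himg]; exact hpull _ hFVGopen
    · intro a ha b hb hab
      have h1 : F (χ a) = F (χ b) := by rw [hFχ a (hVO ha), hFχ b (hVO hb), hab]
      exact hinj (hFinj ha hb h1)
    · intro n U φ hφ hmaps
      have hmaps' : MapsTo (fun v => χ (φ v)) U (F '' VG) := fun v hv => by
        have h1 := hmaps hv; rw [himg] at h1; exact h1
      have h1 : DG.IsPlot U fun v => gG (χ (φ v)) := hgGs (hb1 hφ) hmaps'
      have hm2 : MapsTo (fun v => gG (χ (φ v))) U W := fun v hv => by
        obtain ⟨w, hwVG, hw⟩ := hmaps' hv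
        have hw' : F w = χ (φ v) := hw
        show gG (χ (φ v)) ∈ W
        rw [← hw', hgGinv w hwVG]
        exact hVGW hwVG
      exact hb2 h1 hm2
    · intro v hv
      show χinv (gG (χ (f v))) = v
      rw [← hFχ v (hVO hv), hgGinv _ hv, hleft]

end LieGroupQuotient


/-- If `G` is a Lie group and `K` a totally disconnected normal subgroup,
then the quotient map `π : G → G/K` (with the quotient diffeology) is quasi-étale; in
particular `G/K` is a quasi-étale diffeological space. -/
theorem statement4 {d : ℕ} {G : Type} [Group G] [TopologicalSpace G]
    [ChartedSpace (EuclideanSpace ℝ (Fin d)) G] [LieGroup (𝓡 d) (⊤ : ℕ∞) G]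
    (DG : Diffeology' G) (hDG : IsManifoldDiffeology (𝓡 d) DG)
    (K : Subgroup G) (hK : K.Normal)
    (hTD : TotallyDisconnectedIn DG (K : Set G))
    (DQ : Diffeology' (G ⧸ K))
    (hDQ : IsQuotientDiffeology DG QuotientGroup.mk DQ) :
    IsQuasiEtale DG DQ QuotientGroup.mk ∧ IsQuasiEtaleSpace DQ := by
  classical
  have qmk := quasiEtale_mk hDG hTD hDQ
  refine ⟨qmk, ?_⟩
  intro y
  obtain ⟨g, hg⟩ := QuotientGroup.mk_surjective y
  set e := extChartAt (𝓡 d) g with he_def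
  obtain ⟨ε, εpos, hball⟩ :=
    Metric.isOpen_iff.mp (isOpen_extChartAt_target g) (e g) (mem_extChartAt_target g)
  set β := OpenPartialHomeomorph.univBall (e g) ε with hβ_def
  have hβsource : ∀ v : EuclideanSpace ℝ (Fin d), v ∈ β.source := fun v => by
    rw [hβ_def, OpenPartialHomeomorph.univBall_source]; trivial
  have hβtarget : ∀ b, b ∈ Metric.ball (e g) ε → b ∈ β.target := fun b hb => by
    rw [hβ_def, OpenPartialHomeomorph.univBall_target _ εpos]; exact hb
  have hβmem : ∀ v, β v ∈ Metric.ball (e g) ε := fun v => by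
    have h1 := β.map_source (hβsource v)
    rwa [hβ_def, OpenPartialHomeomorph.univBall_target _ εpos] at h1
  set χ : EuclideanSpace ℝ (Fin d) → G := fun v => e.symm (β v) with hχ_def
  set χinv : G → EuclideanSpace ℝ (Fin d) := fun z => β.symm (e z) with hχinv_def
  set W : Set G := e.symm '' Metric.ball (e g) ε with hW_def
  have hWsub : W ⊆ e.source := by
    rintro _ ⟨b, hb, rfl⟩; exact e.map_target (hball hb)
  have hWe : ∀ x ∈ W, e x ∈ Metric.ball (e g) ε := by
    rintro _ ⟨b, hb, rfl⟩; rwa [e.right_inv (hball hb)]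
  have hWopen : IsOpen W := by
    have h1 : W = e.source ∩ e ⁻¹' Metric.ball (e g) ε := by
      apply Subset.antisymm
      · exact fun x hx => ⟨hWsub hx, hWe x hx⟩
      · rintro x ⟨hx1, hx2⟩
        exact ⟨e x, hx2, e.left_inv hx1⟩
    rw [h1]
    have h2 : ContinuousOn e e.source := by
      rw [he_def]; exact continuousOn_extChartAt (I := 𝓡 d) g
    exact h2.isOpen_inter_preimage (isOpen_extChartAt_source g) Metric.isOpen_ball
  have hmem : ∀ v, χ v ∈ W := fun v => ⟨β v, hβmem v, rfl⟩
  have hleft : ∀ v, χinv (χ v) = v := fun v => by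
    show β.symm (e (e.symm (β v))) = v
    rw [e.right_inv (hball (hβmem v)), β.left_inv (hβsource v)]
  have hright : ∀ x ∈ W, χ (χinv x) = x := by
    rintro _ ⟨b, hb, rfl⟩
    show e.symm (β (β.symm (e (e.symm b)))) = e.symm b
    rw [e.right_inv (hball hb), β.right_inv (hβtarget b hb)]
  set DM := manifoldDiffeology (𝓡 d) (EuclideanSpace ℝ (Fin d)) with hDM_def
  have hβsm : ContMDiff 𝓘(ℝ, EuclideanSpace ℝ (Fin d)) 𝓘(ℝ, EuclideanSpace ℝ (Fin d))
      (⊤ : ℕ∞) β := ContDiff.contMDiff OpenPartialHomeomorph.contDiff_univBall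
  have hχsm : ContMDiffOn 𝓘(ℝ, EuclideanSpace ℝ (Fin d)) (𝓡 d) (⊤ : ℕ∞) χ univ :=
    (contMDiffOn_extChartAt_symm g).comp hβsm.contMDiffOn (fun v _ => hball (hβmem v))
  have hb1 : ∀ {n : ℕ} {U : Set (Fin n → ℝ)} {φ : (Fin n → ℝ) → EuclideanSpace ℝ (Fin d)},
      DM.IsPlot U φ → DG.IsPlot U fun v => χ (φ v) := by
    intro n U φ hφ
    have h1 : IsOpen U := hφ.1
    have h2 : ContMDiffOn 𝓘(ℝ, Fin n → ℝ) 𝓘(ℝ, EuclideanSpace ℝ (Fin d)) (⊤ : ℕ∞) φ U := hφ.2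
    exact (hDG U _).mpr ⟨h1, hχsm.comp h2 (mapsTo_univ _ _)⟩
  have hb2 : ∀ {n : ℕ} {U : Set (Fin n → ℝ)} {ρ : (Fin n → ℝ) → G},
      DG.IsPlot U ρ → MapsTo ρ U W → DM.IsPlot U fun v => χinv (ρ v) := by
    intro n U ρ hρ hmap
    have h1 := (hDG U ρ).mp hρ
    have he1 : ContMDiffOn (𝓡 d) 𝓘(ℝ, EuclideanSpace ℝ (Fin d)) (⊤ : ℕ∞) e e.source := by
      rw [he_def, extChartAt_source]; exact contMDiffOn_extChartAt
    have h2 : ContMDiffOn 𝓘(ℝ, Fin n → ℝ) 𝓘(ℝ, EuclideanSpace ℝ (Fin d)) (⊤ : ℕ∞)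
        (e ∘ ρ) U := he1.comp h1.2 (fun v hv => hWsub (hmap hv))
    have hβs : ContMDiffOn 𝓘(ℝ, EuclideanSpace ℝ (Fin d)) 𝓘(ℝ, EuclideanSpace ℝ (Fin d))
        (⊤ : ℕ∞) β.symm (Metric.ball (e g) ε) := by
      rw [hβ_def]
      exact (OpenPartialHomeomorph.contDiffOn_univBall_symm).contMDiffOn
    have h3 : ContMDiffOn 𝓘(ℝ, Fin n → ℝ) 𝓘(ℝ, EuclideanSpace ℝ (Fin d)) (⊤ : ℕ∞)
        (β.symm ∘ (e ∘ ρ)) U := hβs.comp h2 (fun v hv => hWe _ (hmap hv))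
    exact ⟨h1.1, h3⟩
  have hQE : IsQuasiEtale DM DQ fun v => QuotientGroup.mk (χ v) :=
    quasiEtale_transfer hDG qmk hWopen hmem hleft hright
      (fun {n U φ} hφ => hb1 hφ) (fun {n U ρ} hρ hm => hb2 hρ hm)
  refine ⟨EuclideanSpace ℝ (Fin d), DM, fun v => QuotientGroup.mk (χ v),
    ⟨⟨d, inferInstance, inferInstance, inferInstance,
      isManifoldDiffeology_manifoldDiffeology _ _⟩⟩, hQE, β.symm (e g), ?_⟩
  show QuotientGroup.mk (χ (β.symm (e g))) = y
  have h1 : χ (β.symm (e g)) = g := by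
    show e.symm (β (β.symm (e g))) = g
    rw [β.right_inv (hβtarget _ (Metric.mem_ball_self εpos)), he_def, extChartAt_to_inv]
  rw [h1, hg]
end

section
/- Let X be a quasi-étale diffeological space and π : M → X a quasi-étale chart. If p, q ∈ M satisfy π(p) = π(q), then there exists an open neighborhood O ⊆ M of p and a local diffeomorphism f : O → M with f(p) = q and π ∘ f = π|_O. -/
open Set Function
open scoped Manifold

variable {X Y Z : Type*}

/-- Any two points of a quasi-étale chart lying in the same fiber are
related by a local diffeomorphism over the base. -/
theorem statement7 {X M : Type} (DX : Diffeology' X) (hX : IsQuasiEtaleSpace DX)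
    (DM : Diffeology' M) (hM : IsSmoothManifoldDiffeology DM)
    (π : M → X) (hπ : IsQuasiEtale DM DX π)
    (p q : M) (hpq : π p = π q) :
    ∃ O : Set M, DM.dOpen O ∧ p ∈ O ∧
      ∃ f : M → M, DSmoothOn DM DM f O ∧ f p = q ∧
        (∀ x ∈ O, π (f x) = π x) ∧ IsLocalDiffeoOn DM f O := by
  obtain ⟨⟨d, sm, t2, sc, hdiff'⟩⟩ := hM
  letI := ‹TopologicalSpace M›
  haveI := sm
  have hdiff : IsManifoldDiffeology (𝓡 d) DM := hdiff'
  -- open sets are D-open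
  have hdopen : ∀ {O : Set M}, IsOpen O → DM.dOpen O := by
    intro O hO n U φ hφ
    obtain ⟨hU, hsm⟩ := (hdiff U φ).mp hφ
    exact hsm.continuousOn.isOpen_inter_preimage hU hO
  set c := extChartAt (𝓡 d) p with hc
  set L : EuclideanSpace ℝ (Fin d) ≃L[ℝ] (Fin d → ℝ) :=
    PiLp.continuousLinearEquiv 2 ℝ (fun _ : Fin d => ℝ) with hL
  set U : Set (Fin d → ℝ) := ⇑L.symm ⁻¹' c.target with hU
  have hUopen : IsOpen U := (isOpen_extChartAt_target p).preimage L.symm.continuous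
  have hpsrc : p ∈ c.source := mem_extChartAt_source p
  -- the parametrization φ := c.symm ∘ L.symm is a plot of M
  have hφsm : ContMDiffOn 𝓘(ℝ, Fin d → ℝ) (𝓡 d) (⊤ : ℕ∞) (c.symm ∘ ⇑L.symm) U :=
    (contMDiffOn_extChartAt_symm p).comp
      ((L.symm : (Fin d → ℝ) →L[ℝ] EuclideanSpace ℝ (Fin d)).contMDiff.contMDiffOn)
      (fun u hu => hu)
  have hφ : DM.IsPlot U (c.symm ∘ ⇑L.symm) := (hdiff U _).mpr ⟨hUopen, hφsm⟩
  set u₀ : Fin d → ℝ := L (c p) with hu₀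
  have hu₀U : u₀ ∈ U := by
    simp only [hU, mem_preimage, hu₀, L.symm_apply_apply]
    exact mem_extChartAt_target p
  -- lift the plot π ∘ φ through q using the local subduction property
  have hπφ : DX.IsPlot U (π ∘ (c.symm ∘ ⇑L.symm)) := hπ.1.1 hφ
  have hqfib : π q = (π ∘ (c.symm ∘ ⇑L.symm)) u₀ := by
    simp only [comp_apply, hu₀, L.symm_apply_apply, c.left_inv hpsrc, hpq]
  obtain ⟨V, hVU, hVopen, hu₀V, ψ, hψ, hψu₀, hψeq⟩ := hπ.1.2 hπφ u₀ hu₀U q hqfib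
  -- the domain O and the map f
  set g : M → (Fin d → ℝ) := fun x => L (c x) with hg
  set O : Set M := c.source ∩ g ⁻¹' V with hO
  have hOopen : IsOpen O := by
    have : ContinuousOn g c.source := L.continuous.comp_continuousOn (continuousOn_extChartAt p)
    exact this.isOpen_inter_preimage (isOpen_extChartAt_source p) hVopen
  have hOd : DM.dOpen O := hdopen hOopen
  have hpO : p ∈ O := ⟨hpsrc, hu₀V⟩
  set f : M → M := fun x => ψ (g x) with hf
  have hfp : f p = q := hψu₀
  have hπf : ∀ x ∈ O, π (f x) = π x := by
    intro x hx
    have h1 : π (ψ (g x)) = π ((c.symm ∘ ⇑L.symm) (g x)) := hψeq hx.2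
    simpa only [comp_apply, hg, L.symm_apply_apply, c.left_inv hx.1] using h1
  have hfsm : DSmoothOn DM DM f O := by
    intro n W ρ hρ hmaps
    obtain ⟨hWopen, hρsm⟩ := (hdiff W ρ).mp hρ
    have hρsrc : Set.MapsTo ρ W c.source := fun u hu => (hmaps hu).1
    have hcρ : ContMDiffOn 𝓘(ℝ, Fin n → ℝ) (𝓡 d) (⊤ : ℕ∞) (c ∘ ρ) W := by
      refine ContMDiffOn.comp ?_ hρsm hρsrc
      have h := contMDiffOn_extChartAt (I := 𝓡 d) (x := p) (n := (⊤ : ℕ∞))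
      rwa [← extChartAt_source (𝓡 d)] at h
    have hgρ : ContMDiffOn 𝓘(ℝ, Fin n → ℝ) 𝓘(ℝ, Fin d → ℝ) (⊤ : ℕ∞) (g ∘ ρ) W :=
      (L : EuclideanSpace ℝ (Fin d) →L[ℝ] (Fin d → ℝ)).contMDiff.comp_contMDiffOn hcρ
    have hψsm : ContMDiffOn 𝓘(ℝ, Fin d → ℝ) (𝓡 d) (⊤ : ℕ∞) ψ V := ((hdiff V ψ).mp hψ).2
    have hfρ : ContMDiffOn 𝓘(ℝ, Fin n → ℝ) (𝓡 d) (⊤ : ℕ∞) (f ∘ ρ) W :=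
      hψsm.comp hgρ (fun u hu => (hmaps hu).2)
    exact (hdiff W (f ∘ ρ)).mpr ⟨hWopen, hfρ⟩
  exact ⟨O, hOd, hpO, f, hfsm, hfp, hπf, hπ.2.2 O f hOd hfsm hπf⟩
end

section
/- Suppose f : X → Y is a smooth map of quasi-étale diffeological spaces with a local representation f̃ : M → N (i.e. π_Y ∘ f̃ = f ∘ π_X for quasi-étale charts π_X : M → X and π_Y : N → Y). If f is a local subduction, then f̃ is a submersion; if f is a diffeomorphism, then f̃ is a local diffeomorphism; and if f is constant, then f̃ is locally constant. -/
open Set Function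
open scoped Manifold

variable {X Y Z : Type*}

/-- A diffeomorphism of diffeological spaces: a smooth bijection with smooth inverse. -/
def IsDDiffeomorphism {X Y : Type*} (DX : Diffeology' X) (DY : Diffeology' Y)
    (f : X → Y) : Prop :=
  DSmooth DX DY f ∧ ∃ g : Y → X, DSmooth DY DX g ∧
    Function.LeftInverse g f ∧ Function.RightInverse g f

/-! ## Infrastructure: manifold diffeologies vs. `ContMDiff` -/

section Infra

variable {d : ℕ} {M : Type} [TopologicalSpace M]
  [ChartedSpace (EuclideanSpace ℝ (Fin d)) M]

/-- The chart at `m`, composed with the identification of `EuclideanSpace` with `Fin d → ℝ`. -/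
noncomputable def eChart (d : ℕ) {M : Type} [TopologicalSpace M]
    [ChartedSpace (EuclideanSpace ℝ (Fin d)) M] (m : M) : M → (Fin d → ℝ) :=
  fun x => EuclideanSpace.equiv (Fin d) ℝ (chartAt (EuclideanSpace ℝ (Fin d)) m x)

/-- The inverse chart at `m`, as a map from `Fin d → ℝ`. -/
noncomputable def pChart (d : ℕ) {M : Type} [TopologicalSpace M]
    [ChartedSpace (EuclideanSpace ℝ (Fin d)) M] (m : M) : (Fin d → ℝ) → M :=
  fun u => (chartAt (EuclideanSpace ℝ (Fin d)) m).symm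
    ((EuclideanSpace.equiv (Fin d) ℝ).symm u)

/-- The domain of the inverse chart at `m`. -/
def WChart (d : ℕ) {M : Type} [TopologicalSpace M]
    [ChartedSpace (EuclideanSpace ℝ (Fin d)) M] (m : M) : Set (Fin d → ℝ) :=
  (EuclideanSpace.equiv (Fin d) ℝ).symm ⁻¹' (chartAt (EuclideanSpace ℝ (Fin d)) m).target

theorem isOpen_WChart (m : M) : IsOpen (WChart d m) :=
  (chartAt (EuclideanSpace ℝ (Fin d)) m).open_target.preimage
    (EuclideanSpace.equiv (Fin d) ℝ).symm.continuous

theorem eChart_mem_WChart {m x : M}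
    (hx : x ∈ (chartAt (EuclideanSpace ℝ (Fin d)) m).source) :
    eChart d m x ∈ WChart d m := by
  simp only [WChart, eChart, Set.mem_preimage, ContinuousLinearEquiv.symm_apply_apply]
  exact (chartAt (EuclideanSpace ℝ (Fin d)) m).map_source hx

theorem pChart_eChart {m x : M}
    (hx : x ∈ (chartAt (EuclideanSpace ℝ (Fin d)) m).source) :
    pChart d m (eChart d m x) = x := by
  simp only [pChart, eChart, ContinuousLinearEquiv.symm_apply_apply]
  exact (chartAt (EuclideanSpace ℝ (Fin d)) m).left_inv hx

theorem mapsTo_pChart (m : M) :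
    Set.MapsTo (pChart d m) (WChart d m) (chartAt (EuclideanSpace ℝ (Fin d)) m).source :=
  fun _ hu => (chartAt (EuclideanSpace ℝ (Fin d)) m).map_target hu

variable [IsManifold (𝓡 d) (⊤ : ℕ∞) M]

theorem contMDiffOn_pChart (m : M) :
    ContMDiffOn 𝓘(ℝ, Fin d → ℝ) (𝓡 d) (⊤ : ℕ∞) (pChart d m) (WChart d m) := by
  have h1 : ContMDiffOn (𝓡 d) (𝓡 d) (⊤ : ℕ∞) (chartAt (EuclideanSpace ℝ (Fin d)) m).symm
      (chartAt (EuclideanSpace ℝ (Fin d)) m).target := contMDiffOn_chart_symm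
  have h2 : ContMDiff 𝓘(ℝ, Fin d → ℝ) (𝓡 d) (⊤ : ℕ∞)
      ((EuclideanSpace.equiv (Fin d) ℝ).symm : (Fin d → ℝ) → EuclideanSpace ℝ (Fin d)) :=
    contMDiff_iff_contDiff.2 (EuclideanSpace.equiv (Fin d) ℝ).symm.contDiff
  exact h1.comp h2.contMDiffOn (fun u hu => hu)

theorem contMDiffOn_eChart (m : M) :
    ContMDiffOn (𝓡 d) 𝓘(ℝ, Fin d → ℝ) (⊤ : ℕ∞) (eChart d m)
      (chartAt (EuclideanSpace ℝ (Fin d)) m).source := by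
  have h2 : ContMDiff (𝓡 d) 𝓘(ℝ, Fin d → ℝ) (⊤ : ℕ∞)
      ((EuclideanSpace.equiv (Fin d) ℝ) : EuclideanSpace ℝ (Fin d) → (Fin d → ℝ)) :=
    contMDiff_iff_contDiff.2 (EuclideanSpace.equiv (Fin d) ℝ).contDiff
  exact h2.comp_contMDiffOn contMDiffOn_chart

theorem isPlot_pChart {DM : Diffeology' M} (hDM : IsManifoldDiffeology (𝓡 d) DM) (m : M) :
    DM.IsPlot (WChart d m) (pChart d m) :=
  (hDM _ _).2 ⟨isOpen_WChart m, contMDiffOn_pChart m⟩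

/-- Open sets are D-open in a manifold diffeology. -/
theorem Diffeology'.dOpen_of_isOpen {DM : Diffeology' M} (hDM : IsManifoldDiffeology (𝓡 d) DM)
    {S : Set M} (hS : IsOpen S) : DM.dOpen S := by
  intro n U φ hφ
  obtain ⟨hU, hφc⟩ := (hDM U φ).1 hφ
  exact hφc.continuousOn.isOpen_inter_preimage hU hS

/-- D-open sets are open in a manifold diffeology. -/
theorem Diffeology'.isOpen_of_dOpen {DM : Diffeology' M} (hDM : IsManifoldDiffeology (𝓡 d) DM)
    {S : Set M} (hS : DM.dOpen S) : IsOpen S := by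
  rw [isOpen_iff_forall_mem_open]
  intro m hm
  have hT : IsOpen (WChart d m ∩ pChart d m ⁻¹' S) := hS (isPlot_pChart hDM m)
  refine ⟨pChart d m '' (WChart d m ∩ pChart d m ⁻¹' S), ?_, ?_, ?_⟩
  · rintro _ ⟨u, hu, rfl⟩
    exact hu.2
  · have heq : pChart d m '' (WChart d m ∩ pChart d m ⁻¹' S) =
        (chartAt (EuclideanSpace ℝ (Fin d)) m).symm ''
          ((EuclideanSpace.equiv (Fin d) ℝ).symm '' (WChart d m ∩ pChart d m ⁻¹' S)) := by
      rw [Set.image_image]; rfl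
    rw [heq]
    have hopen : IsOpen ((EuclideanSpace.equiv (Fin d) ℝ).symm ''
        (WChart d m ∩ pChart d m ⁻¹' S)) :=
      (EuclideanSpace.equiv (Fin d) ℝ).symm.toHomeomorph.isOpenMap _ hT
    refine (chartAt (EuclideanSpace ℝ (Fin d)) m).symm.isOpen_image_of_subset_source
      hopen ?_
    rintro _ ⟨u, hu, rfl⟩
    exact hu.1
  · refine ⟨eChart d m m, ⟨eChart_mem_WChart (mem_chart_source _ m), ?_⟩,
      pChart_eChart (mem_chart_source _ m)⟩
    rw [Set.mem_preimage, pChart_eChart (mem_chart_source _ m)]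
    exact hm

variable {d' : ℕ} {N : Type} [TopologicalSpace N]
  [ChartedSpace (EuclideanSpace ℝ (Fin d')) N] [IsManifold (𝓡 d') (⊤ : ℕ∞) N]

/-- A map that is diffeologically smooth on an open set is `ContMDiffOn` there. -/
theorem DSmoothOn.contMDiffOn {DM : Diffeology' M} (hDM : IsManifoldDiffeology (𝓡 d) DM)
    {DN : Diffeology' N} (hDN : IsManifoldDiffeology (𝓡 d') DN)
    {F : M → N} {S : Set M} (hS : IsOpen S) (hF : DSmoothOn DM DN F S) :
    ContMDiffOn (𝓡 d) (𝓡 d') (⊤ : ℕ∞) F S := by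
  suffices h : ∀ x ∈ S, ContMDiffAt (𝓡 d) (𝓡 d') (⊤ : ℕ∞) F x from
    fun x hx => (h x hx).contMDiffWithinAt
  intro m hm
  set T := WChart d m ∩ pChart d m ⁻¹' S with hTdef
  have hTopen : IsOpen T :=
    (contMDiffOn_pChart m).continuousOn.isOpen_inter_preimage (isOpen_WChart m) hS
  have hplotT : DM.IsPlot T (pChart d m) :=
    (hDM _ _).2 ⟨hTopen, (contMDiffOn_pChart m).mono inter_subset_left⟩
  have hplotF : DN.IsPlot T (F ∘ pChart d m) := hF hplotT (fun u hu => hu.2)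
  have hcm : ContMDiffOn 𝓘(ℝ, Fin d → ℝ) (𝓡 d') (⊤ : ℕ∞) (F ∘ pChart d m) T :=
    ((hDN _ _).1 hplotF).2
  have hmem : eChart d m m ∈ T := by
    refine ⟨eChart_mem_WChart (mem_chart_source _ m), ?_⟩
    rw [Set.mem_preimage, pChart_eChart (mem_chart_source _ m)]
    exact hm
  have heC : ContMDiffAt (𝓡 d) 𝓘(ℝ, Fin d → ℝ) (⊤ : ℕ∞) (eChart d m) m :=
    (contMDiffOn_eChart m).contMDiffAt
      ((chartAt (EuclideanSpace ℝ (Fin d)) m).open_source.mem_nhds (mem_chart_source _ m))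
  have hFp : ContMDiffAt 𝓘(ℝ, Fin d → ℝ) (𝓡 d') (⊤ : ℕ∞) (F ∘ pChart d m) (eChart d m m) :=
    hcm.contMDiffAt (hTopen.mem_nhds hmem)
  have hcomp : ContMDiffAt (𝓡 d) (𝓡 d') (⊤ : ℕ∞) ((F ∘ pChart d m) ∘ eChart d m) m :=
    hFp.comp m heC
  refine hcomp.congr_of_eventuallyEq ?_
  filter_upwards [(chartAt (EuclideanSpace ℝ (Fin d)) m).open_source.mem_nhds
    (mem_chart_source _ m)] with x hx
  simp only [Function.comp_apply, pChart_eChart hx]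

/-- A diffeologically smooth map between manifolds is `ContMDiff`. -/
theorem DSmooth.contMDiff {DM : Diffeology' M} (hDM : IsManifoldDiffeology (𝓡 d) DM)
    {DN : Diffeology' N} (hDN : IsManifoldDiffeology (𝓡 d') DN)
    {F : M → N} (hF : DSmooth DM DN F) : ContMDiff (𝓡 d) (𝓡 d') (⊤ : ℕ∞) F := by
  rw [← contMDiffOn_univ]
  exact DSmoothOn.contMDiffOn hDM hDN isOpen_univ (fun hφ _ => hF hφ)

/-- The derivative of a diffeological local diffeomorphism on an open set is bijective. -/
theorem bijective_mfderiv_of_isLocalDiffeoOn {DM : Diffeology' M}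
    (hDM : IsManifoldDiffeology (𝓡 d) DM) {g : M → M} {O : Set M} (hO : IsOpen O)
    (hg : DSmoothOn DM DM g O) (hld : IsLocalDiffeoOn DM g O) {m : M} (hm : m ∈ O) :
    Function.Bijective (mfderiv (𝓡 d) (𝓡 d) g m) := by
  obtain ⟨V, hVO, hVd, hmV, hgVd, hinjV, h, hhsm, hinv⟩ := hld m hm
  have hVopen : IsOpen V := Diffeology'.isOpen_of_dOpen hDM hVd
  have hgVopen : IsOpen (g '' V) := Diffeology'.isOpen_of_dOpen hDM hgVd
  have hgc : ContMDiffOn (𝓡 d) (𝓡 d) (⊤ : ℕ∞) g O := DSmoothOn.contMDiffOn hDM hDM hO hg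
  have hhc : ContMDiffOn (𝓡 d) (𝓡 d) (⊤ : ℕ∞) h (g '' V) :=
    DSmoothOn.contMDiffOn hDM hDM hgVopen hhsm
  have hgA : MDifferentiableAt (𝓡 d) (𝓡 d) g m :=
    (hgc.contMDiffAt (hO.mem_nhds hm)).mdifferentiableAt (by simp)
  have hgmV : g m ∈ g '' V := ⟨m, hmV, rfl⟩
  have hhA : MDifferentiableAt (𝓡 d) (𝓡 d) h (g m) :=
    (hhc.contMDiffAt (hgVopen.mem_nhds hgmV)).mdifferentiableAt (by simp)
  have h1 : mfderiv (𝓡 d) (𝓡 d) (h ∘ g) m = ContinuousLinearMap.id ℝ _ := by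
    have heq : (h ∘ g) =ᶠ[nhds m] id := by
      filter_upwards [hVopen.mem_nhds hmV] with x hx
      exact hinv x hx
    rw [heq.mfderiv_eq, mfderiv_id]
  have h2 := mfderiv_comp m hhA hgA
  have hhgm : h (g m) = m := hinv m hmV
  have hgA2 : MDifferentiableAt (𝓡 d) (𝓡 d) g (h (g m)) := by rw [hhgm]; exact hgA
  have h3 : mfderiv (𝓡 d) (𝓡 d) (g ∘ h) (g m) = ContinuousLinearMap.id ℝ _ := by
    have heq : (g ∘ h) =ᶠ[nhds (g m)] id := by
      filter_upwards [hgVopen.mem_nhds hgmV] with y hy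
      obtain ⟨v, hv, rfl⟩ := hy
      show g (h (g v)) = g v
      rw [hinv v hv]
    rw [heq.mfderiv_eq, mfderiv_id]
  have h4 := mfderiv_comp (g m) hgA2 hhA
  rw [hhgm] at h4
  constructor
  · have hli : Function.LeftInverse (mfderiv (𝓡 d) (𝓡 d) h (g m))
        (mfderiv (𝓡 d) (𝓡 d) g m) := fun x => by
      have := (h2.symm.trans h1)
      calc mfderiv (𝓡 d) (𝓡 d) h (g m) (mfderiv (𝓡 d) (𝓡 d) g m x)
          = ((mfderiv (𝓡 d) (𝓡 d) h (g m)).comp (mfderiv (𝓡 d) (𝓡 d) g m)) x := rfl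
        _ = x := by rw [this]; rfl
    exact hli.injective
  · have hri : Function.RightInverse (mfderiv (𝓡 d) (𝓡 d) h (g m))
        (mfderiv (𝓡 d) (𝓡 d) g m) := fun y => by
      have := (h4.symm.trans h3)
      calc mfderiv (𝓡 d) (𝓡 d) g m (mfderiv (𝓡 d) (𝓡 d) h (g m) y)
          = ((mfderiv (𝓡 d) (𝓡 d) g m).comp (mfderiv (𝓡 d) (𝓡 d) h (g m))) y := rfl
        _ = y := by rw [this]; rfl
    exact hri.surjective

end Infra

/-- A diffeomorphism of diffeological spaces is a local subduction. -/
theorem IsDDiffeomorphism.isLocalSubduction {X Y : Type*} {DX : Diffeology' X}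
    {DY : Diffeology' Y} {f : X → Y} (h : IsDDiffeomorphism DX DY f) :
    IsLocalSubduction DX DY f := by
  obtain ⟨hf, g, hg, hl, hr⟩ := h
  refine ⟨hf, ?_⟩
  intro n U φ hφ u hu x hx
  refine ⟨U, subset_rfl, DY.isOpen_of_isPlot hφ, hu, g ∘ φ, hg hφ, ?_, ?_⟩
  · show g (φ u) = x
    rw [← hx, hl x]
  · intro v _
    show f (g (φ v)) = φ v
    exact hr (φ v)

/-- Let `f̃ : M → N` be a local representation of a smooth map
`f : X → Y` of quasi-étale diffeological spaces.  If `f` is a local subduction then `f̃`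
is a submersion; if `f` is a diffeomorphism then `f̃` is a local diffeomorphism; and if
`f` is constant then `f̃` is locally constant. -/
theorem statement8 {dM dN : ℕ} {X Y M N : Type}
    (DX : Diffeology' X) (DY : Diffeology' Y)
    (hX : IsQuasiEtaleSpace DX) (hY : IsQuasiEtaleSpace DY)
    [TopologicalSpace M] [ChartedSpace (EuclideanSpace ℝ (Fin dM)) M]
    [IsManifold (𝓡 dM) (⊤ : ℕ∞) M]
    [TopologicalSpace N] [ChartedSpace (EuclideanSpace ℝ (Fin dN)) N]
    [IsManifold (𝓡 dN) (⊤ : ℕ∞) N]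
    (DM : Diffeology' M) (hDM : IsManifoldDiffeology (𝓡 dM) DM)
    (DN : Diffeology' N) (hDN : IsManifoldDiffeology (𝓡 dN) DN)
    (πX : M → X) (hπX : IsQuasiEtale DM DX πX)
    (πY : N → Y) (hπY : IsQuasiEtale DN DY πY)
    (f : X → Y) (hf : DSmooth DX DY f)
    (ft : M → N) (hft : DSmooth DM DN ft)
    (hcomm : πY ∘ ft = f ∘ πX) :
    (IsLocalSubduction DX DY f →
        ∀ x : M, Function.Surjective ⇑(mfderiv (𝓡 dM) (𝓡 dN) ft x)) ∧
    (IsDDiffeomorphism DX DY f →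
        ∀ x : M, Function.Bijective ⇑(mfderiv (𝓡 dM) (𝓡 dN) ft x)) ∧
    ((∃ y : Y, ∀ x : X, f x = y) → IsLocallyConstant ft) := by
  have hftC : ContMDiff (𝓡 dM) (𝓡 dN) (⊤ : ℕ∞) ft := DSmooth.contMDiff hDM hDN hft
  have hcommFun : ∀ x : M, πY (ft x) = f (πX x) := fun x => congrFun hcomm x
  have key : IsLocalSubduction DX DY f →
      ∀ m : M, Function.Surjective ⇑(mfderiv (𝓡 dM) (𝓡 dN) ft m) := by
    intro hlsub m
    have hsrc : ft m ∈ (chartAt (EuclideanSpace ℝ (Fin dN)) (ft m)).source :=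
      mem_chart_source _ (ft m)
    have hu₀W : eChart dN (ft m) (ft m) ∈ WChart dN (ft m) := eChart_mem_WChart hsrc
    have hpu₀ : pChart dN (ft m) (eChart dN (ft m) (ft m)) = ft m := pChart_eChart hsrc
    have hplotY : DY.IsPlot (WChart dN (ft m)) (πY ∘ pChart dN (ft m)) :=
      hπY.1.1 (isPlot_pChart hDN (ft m))
    have hfx : f (πX m) = (πY ∘ pChart dN (ft m)) (eChart dN (ft m) (ft m)) := by
      show f (πX m) = πY (pChart dN (ft m) (eChart dN (ft m) (ft m)))
      rw [hpu₀, hcommFun m]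
    obtain ⟨V, hVW, hVopen, hu₀V, ψ, hψplot, hψu₀, hfψ⟩ :=
      hlsub.2 hplotY _ hu₀W (πX m) hfx
    obtain ⟨V', hV'V, hV'open, hu₀V', χ, hχplot, hχu₀, hπχ⟩ :=
      hπX.1.2 hψplot _ hu₀V m hψu₀.symm
    have hπχ' : ∀ v ∈ V', πX (χ v) = ψ v := fun v hv => hπχ hv
    have hfψ' : ∀ v ∈ V, f (ψ v) = πY (pChart dN (ft m) v) := fun v hv => hfψ hv
    have hOopen : IsOpen ((chartAt (EuclideanSpace ℝ (Fin dN)) (ft m)).source ∩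
        eChart dN (ft m) ⁻¹' V') :=
      (contMDiffOn_eChart (d := dN) (ft m)).continuousOn.isOpen_inter_preimage
        (chartAt _ (ft m)).open_source hV'open
    have hn₀O : ft m ∈ (chartAt (EuclideanSpace ℝ (Fin dN)) (ft m)).source ∩
        eChart dN (ft m) ⁻¹' V' := ⟨hsrc, hu₀V'⟩
    have hπeq : ∀ n ∈ (chartAt (EuclideanSpace ℝ (Fin dN)) (ft m)).source ∩
        eChart dN (ft m) ⁻¹' V', πY ((ft ∘ χ ∘ eChart dN (ft m)) n) = πY n := by
      intro n hn
      show πY (ft (χ (eChart dN (ft m) n))) = πY n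
      rw [hcommFun, hπχ' _ hn.2, hfψ' _ (hV'V hn.2), pChart_eChart hn.1]
    have hgsm : DSmoothOn DN DN (ft ∘ χ ∘ eChart dN (ft m))
        ((chartAt (EuclideanSpace ℝ (Fin dN)) (ft m)).source ∩
          eChart dN (ft m) ⁻¹' V') := by
      intro k U θ hθ hmaps
      obtain ⟨hUopen, hθc⟩ := (hDN U θ).1 hθ
      have hec : ContMDiffOn 𝓘(ℝ, Fin k → ℝ) 𝓘(ℝ, Fin dN → ℝ) (⊤ : ℕ∞)
          (eChart dN (ft m) ∘ θ) U :=
        (contMDiffOn_eChart (d := dN) (ft m)).comp hθc (fun u hu => (hmaps hu).1)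
      have hχcc : ContMDiffOn 𝓘(ℝ, Fin dN → ℝ) (𝓡 dM) (⊤ : ℕ∞) χ V' := ((hDM _ _).1 hχplot).2
      have hplot2 : DM.IsPlot U (χ ∘ (eChart dN (ft m) ∘ θ)) :=
        (hDM _ _).2 ⟨hUopen, hχcc.comp hec (fun u hu => (hmaps hu).2)⟩
      have hre : (ft ∘ χ ∘ eChart dN (ft m)) ∘ θ = ft ∘ (χ ∘ (eChart dN (ft m) ∘ θ)) := rfl
      rw [hre]
      exact hft hplot2
    have hld := hπY.2.2 _ _ (Diffeology'.dOpen_of_isOpen hDN hOopen) hgsm hπeq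
    have hbij := bijective_mfderiv_of_isLocalDiffeoOn hDN hOopen hgsm hld hn₀O
    have hχc : ContMDiffOn 𝓘(ℝ, Fin dN → ℝ) (𝓡 dM) (⊤ : ℕ∞) χ V' := ((hDM _ _).1 hχplot).2
    have heCA : ContMDiffAt (𝓡 dN) 𝓘(ℝ, Fin dN → ℝ) (⊤ : ℕ∞) (eChart dN (ft m)) (ft m) :=
      (contMDiffOn_eChart (d := dN) (ft m)).contMDiffAt
        ((chartAt _ (ft m)).open_source.mem_nhds hsrc)
    have hχA : ContMDiffAt 𝓘(ℝ, Fin dN → ℝ) (𝓡 dM) (⊤ : ℕ∞) χ (eChart dN (ft m) (ft m)) :=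
      hχc.contMDiffAt (hV'open.mem_nhds hu₀V')
    have hχe : ContMDiffAt (𝓡 dN) (𝓡 dM) (⊤ : ℕ∞) (χ ∘ eChart dN (ft m)) (ft m) :=
      hχA.comp (ft m) heCA
    have hftA : MDifferentiableAt (𝓡 dM) (𝓡 dN) ft ((χ ∘ eChart dN (ft m)) (ft m)) :=
      (hftC _).mdifferentiableAt (by simp)
    have hcompD := mfderiv_comp (ft m) hftA (hχe.mdifferentiableAt (by simp))
    rw [show (χ ∘ eChart dN (ft m)) (ft m) = m from hχu₀] at hcompD
    have hsurj : Function.Surjective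
        ⇑((mfderiv (𝓡 dM) (𝓡 dN) ft m).comp
          (mfderiv (𝓡 dN) (𝓡 dM) (χ ∘ eChart dN (ft m)) (ft m))) := by
      rw [← hcompD]
      exact hbij.surjective
    exact Function.Surjective.of_comp
      (g := ⇑(mfderiv (𝓡 dN) (𝓡 dM) (χ ∘ eChart dN (ft m)) (ft m))) hsurj
  refine ⟨key, ?_, ?_⟩
  · -- diffeomorphism case
    intro hdiff m
    have hsurj := key hdiff.isLocalSubduction m
    obtain ⟨hfsm, f', hf'sm, hleft, hright⟩ := hdiff
    refine ⟨?_, hsurj⟩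
    have hsrc : ft m ∈ (chartAt (EuclideanSpace ℝ (Fin dN)) (ft m)).source :=
      mem_chart_source _ (ft m)
    have hu₀W : eChart dN (ft m) (ft m) ∈ WChart dN (ft m) := eChart_mem_WChart hsrc
    have hpu₀ : pChart dN (ft m) (eChart dN (ft m) (ft m)) = ft m := pChart_eChart hsrc
    have hplotX : DX.IsPlot (WChart dN (ft m)) (f' ∘ (πY ∘ pChart dN (ft m))) :=
      hf'sm (hπY.1.1 (isPlot_pChart hDN (ft m)))
    have hx : πX m = (f' ∘ (πY ∘ pChart dN (ft m))) (eChart dN (ft m) (ft m)) := by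
      show πX m = f' (πY (pChart dN (ft m) (eChart dN (ft m) (ft m))))
      rw [hpu₀, hcommFun m, hleft (πX m)]
    obtain ⟨V₂, hV₂W, hV₂open, hu₀V₂, χ₂, hχ₂plot, hχ₂u₀, hπχ₂⟩ :=
      hπX.1.2 hplotX _ hu₀W m hx
    have hπχ₂' : ∀ v ∈ V₂, πX (χ₂ v) = f' (πY (pChart dN (ft m) v)) :=
      fun v hv => hπχ₂ hv
    have hOopen : IsOpen (ft ⁻¹' ((chartAt (EuclideanSpace ℝ (Fin dN)) (ft m)).source ∩
        eChart dN (ft m) ⁻¹' V₂)) :=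
      ((contMDiffOn_eChart (d := dN) (ft m)).continuousOn.isOpen_inter_preimage
        (chartAt _ (ft m)).open_source hV₂open).preimage hftC.continuous
    have hmO : m ∈ ft ⁻¹' ((chartAt (EuclideanSpace ℝ (Fin dN)) (ft m)).source ∩
        eChart dN (ft m) ⁻¹' V₂) := ⟨hsrc, hu₀V₂⟩
    have hπeq : ∀ x ∈ ft ⁻¹' ((chartAt (EuclideanSpace ℝ (Fin dN)) (ft m)).source ∩
        eChart dN (ft m) ⁻¹' V₂),
        πX ((χ₂ ∘ eChart dN (ft m) ∘ ft) x) = πX x := by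
      intro x hx'
      show πX (χ₂ (eChart dN (ft m) (ft x))) = πX x
      rw [hπχ₂' _ hx'.2, pChart_eChart hx'.1, hcommFun x, hleft (πX x)]
    have hGsm : DSmoothOn DM DM (χ₂ ∘ eChart dN (ft m) ∘ ft)
        (ft ⁻¹' ((chartAt (EuclideanSpace ℝ (Fin dN)) (ft m)).source ∩
          eChart dN (ft m) ⁻¹' V₂)) := by
      intro k U θ hθ hmaps
      have hftθ : DN.IsPlot U (ft ∘ θ) := hft hθ
      obtain ⟨hUopen, hftθc⟩ := (hDN U (ft ∘ θ)).1 hftθ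
      have hec : ContMDiffOn 𝓘(ℝ, Fin k → ℝ) 𝓘(ℝ, Fin dN → ℝ) (⊤ : ℕ∞)
          (eChart dN (ft m) ∘ (ft ∘ θ)) U :=
        (contMDiffOn_eChart (d := dN) (ft m)).comp hftθc (fun u hu => (hmaps hu).1)
      have hχcc : ContMDiffOn 𝓘(ℝ, Fin dN → ℝ) (𝓡 dM) (⊤ : ℕ∞) χ₂ V₂ := ((hDM _ _).1 hχ₂plot).2
      have hplot2 : DM.IsPlot U (χ₂ ∘ (eChart dN (ft m) ∘ (ft ∘ θ))) :=
        (hDM _ _).2 ⟨hUopen, hχcc.comp hec (fun u hu => (hmaps hu).2)⟩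
      have hre : (χ₂ ∘ eChart dN (ft m) ∘ ft) ∘ θ =
          χ₂ ∘ (eChart dN (ft m) ∘ (ft ∘ θ)) := rfl
      rw [hre]
      exact hplot2
    have hld := hπX.2.2 _ _ (Diffeology'.dOpen_of_isOpen hDM hOopen) hGsm hπeq
    have hbij := bijective_mfderiv_of_isLocalDiffeoOn hDM hOopen hGsm hld hmO
    have hχ₂c : ContMDiffOn 𝓘(ℝ, Fin dN → ℝ) (𝓡 dM) (⊤ : ℕ∞) χ₂ V₂ := ((hDM _ _).1 hχ₂plot).2
    have heCA : ContMDiffAt (𝓡 dN) 𝓘(ℝ, Fin dN → ℝ) (⊤ : ℕ∞) (eChart dN (ft m)) (ft m) :=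
      (contMDiffOn_eChart (d := dN) (ft m)).contMDiffAt
        ((chartAt _ (ft m)).open_source.mem_nhds hsrc)
    have hχ₂A : ContMDiffAt 𝓘(ℝ, Fin dN → ℝ) (𝓡 dM) (⊤ : ℕ∞) χ₂ (eChart dN (ft m) (ft m)) :=
      hχ₂c.contMDiffAt (hV₂open.mem_nhds hu₀V₂)
    have hχ₂e : ContMDiffAt (𝓡 dN) (𝓡 dM) (⊤ : ℕ∞) (χ₂ ∘ eChart dN (ft m)) (ft m) :=
      hχ₂A.comp (ft m) heCA
    have hcompD := mfderiv_comp m (hχ₂e.mdifferentiableAt (by simp))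
      ((hftC m).mdifferentiableAt (by simp))
    have hbij' : Function.Bijective
        ⇑(mfderiv (𝓡 dM) (𝓡 dM) ((χ₂ ∘ eChart dN (ft m)) ∘ ft) m) := hbij
    have hinj : Function.Injective
        ⇑((mfderiv (𝓡 dN) (𝓡 dM) (χ₂ ∘ eChart dN (ft m)) (ft m)).comp
          (mfderiv (𝓡 dM) (𝓡 dN) ft m)) := by
      rw [← hcompD]
      exact hbij'.injective
    rw [ContinuousLinearMap.coe_comp'] at hinj
    exact hinj.of_comp
  · -- constant case
    rintro ⟨y, hy⟩
    rw [IsLocallyConstant.iff_exists_open]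
    intro m
    have hsrc : m ∈ (chartAt (EuclideanSpace ℝ (Fin dM)) m).source := mem_chart_source _ m
    have hplot : DN.IsPlot (WChart dM m) (ft ∘ pChart dM m) :=
      hft (isPlot_pChart hDM m)
    have hmaps : Set.MapsTo (ft ∘ pChart dM m) (WChart dM m) (πY ⁻¹' {y}) := by
      intro u _
      show πY (ft (pChart dM m u)) ∈ ({y} : Set Y)
      rw [hcommFun, hy]
      exact rfl
    obtain ⟨V, hVW, hVopen, huV, hconst⟩ :=
      hπY.2.1 y hplot hmaps (eChart dM m m) (eChart_mem_WChart hsrc)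
    refine ⟨(chartAt (EuclideanSpace ℝ (Fin dM)) m).source ∩ eChart dM m ⁻¹' V,
      (contMDiffOn_eChart (d := dM) m).continuousOn.isOpen_inter_preimage
        (chartAt _ m).open_source hVopen, ⟨hsrc, huV⟩, ?_⟩
    intro x hx
    have h1 : ft x = (ft ∘ pChart dM m) (eChart dM m x) := by
      show ft x = ft (pChart dM m (eChart dM m x))
      rw [pChart_eChart hx.1]
    rw [h1, hconst _ hx.2]
    show ft (pChart dM m (eChart dM m m)) = ft m
    rw [pChart_eChart hsrc]
end
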